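/- arXiv:1602.05406 — 4 statements merged into one kernel-verified Lean document; each statement's English description precedes it below -/
import Mathlib

section
/- Let K be a simplicial complex and I a vertex of K whose link Lk(I) is contractible. Then the geometric realization of K is homotopy equivalent to the geometric realization of the subcomplex K \ St(I), obtained by removing the open star of I. -/
open scoped Classical

/-- Geometric realization of an abstract simplicial complex with (finite) vertex
set `V`: the set of convex weight functions whose support is a face. -/
def realization {V : Type} [Fintype V] (K : Set (Finset V)) : Set (V → ℝ) :=
  {f | (∀ v, 0 ≤ f v) ∧ (∑ v, f v) = 1 ∧ (Finset.univ.filter fun v => f v ≠ 0) ∈ K}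

/-- The link of a vertex `v` in `K`: the faces `σ` with `v ∉ σ` and `σ ∪ {v} ∈ K`. -/
def link {V : Type} [DecidableEq V] (K : Set (Finset V)) (v : V) : Set (Finset V) :=
  {σ | v ∉ σ ∧ insert v σ ∈ K}

/-!
Every point `x ≠ v` of the closed star of `v` is `x v • v + (1 - x v) • y` for a unique `y` in the
link, so the closed star is the cone with apex `v` over the link. A contraction `H` of the link to a
point `p` can therefore be spread over the cone: at time `s` the cone coordinate shrinks from `x v`
to `x v (1 - s)` while `y` runs along `H`. This deforms the closed star onto the link and fixes the
link pointwise. The closed star and `K \ St v` are closed, cover `|K|` and meet inside the link, so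
the deformation extends by the identity to a strong deformation retraction of `|K|` onto
`|K \ St v|`.
-/

open Set Filter Topology

section StrongDeformationRetraction

variable {α : Type*} [TopologicalSpace α]

structure IsStrongDeformationRetraction (G : ℝ × α → α) (X A : Set α) : Prop where
  continuousOn : ContinuousOn G (Icc 0 1 ×ˢ X)
  mapsTo : MapsTo G (Icc 0 1 ×ˢ X) X
  apply_zero : ∀ x ∈ X, G (0, x) = x
  apply_one_mem : ∀ x ∈ X, G (1, x) ∈ A
  apply_of_mem : ∀ t ∈ Icc (0 : ℝ) 1, ∀ a ∈ A, G (t, a) = a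

namespace IsStrongDeformationRetraction

variable {G : ℝ × α → α} {X A : Set α}

theorem homotopyEquiv (hG : IsStrongDeformationRetraction G X A) (hAX : A ⊆ X) :
    Nonempty (ContinuousMap.HomotopyEquiv X A) := by
  let r : C(X, A) := ⟨fun x => ⟨G (1, x), hG.apply_one_mem x x.2⟩,
    (hG.continuousOn.comp_continuous (by fun_prop)
      fun x => ⟨right_mem_Icc.2 zero_le_one, x.2⟩).subtype_mk _⟩
  let ι : C(A, X) := ⟨fun a => ⟨a, hAX a.2⟩, by fun_prop⟩
  let F : (ContinuousMap.id X).Homotopy (ι.comp r) :=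
    { toFun := fun q => ⟨G (q.1, q.2), hG.mapsTo ⟨q.1.2, q.2.2⟩⟩
      continuous_toFun := (hG.continuousOn.comp_continuous (by fun_prop)
        fun q => ⟨q.1.2, q.2.2⟩).subtype_mk _
      map_zero_left := fun x => Subtype.ext (hG.apply_zero x x.2)
      map_one_left := fun _ => rfl }
  have hrι : r.comp ι = ContinuousMap.id A :=
    ContinuousMap.ext fun a => Subtype.ext (hG.apply_of_mem 1 (right_mem_Icc.2 zero_le_one) a a.2)
  exact ⟨⟨r, ι, ⟨F.symm⟩, hrι ▸ ContinuousMap.Homotopic.refl _⟩⟩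

theorem union {B C : Set α} (hG : IsStrongDeformationRetraction G B C) (hCA : C ⊆ A)
    (hAB : A ∩ B ⊆ C) (hA : IsClosed A) (hB : IsClosed B) :
    IsStrongDeformationRetraction (fun q => if q.2 ∈ B then G q else q.2) (A ∪ B) A where
  continuousOn := by
    rw [prod_union]
    refine ContinuousOn.union_of_isClosed ?_ ?_ (isClosed_Icc.prod hA) (isClosed_Icc.prod hB)
    · refine continuous_snd.continuousOn.congr fun q hq => ?_
      split_ifs with h
      · exact hG.apply_of_mem _ hq.1 _ (hAB ⟨hq.2, h⟩)
      · rfl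
    · exact hG.continuousOn.congr fun q hq => if_pos hq.2
  mapsTo q hq := by
    dsimp only
    split_ifs with h
    · exact Or.inr (hG.mapsTo ⟨hq.1, h⟩)
    · exact hq.2
  apply_zero x hx := by
    dsimp only
    split_ifs with h
    · exact hG.apply_zero x h
    · rfl
  apply_one_mem x hx := by
    dsimp only
    split_ifs with h
    · exact hCA (hG.apply_one_mem x h)
    · exact hx.resolve_right h
  apply_of_mem t ht a ha := by
    dsimp only
    split_ifs with h
    · exact hG.apply_of_mem t ht a (hAB ⟨ha, h⟩)
    · rfl

end IsStrongDeformationRetraction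

end StrongDeformationRetraction

theorem tendsto_smul_add_one_sub_smul_of_tendsto_one {α E : Type*} [NormedAddCommGroup E]
    [NormedSpace ℝ E] {l : Filter α} {c : α → ℝ} {z : α → E} (a : E) (hc : Tendsto c l (𝓝 1))
    (hz : IsBoundedUnder (· ≤ ·) l fun i => ‖z i‖) :
    Tendsto (fun i => c i • a + (1 - c i) • z i) l (𝓝 a) := by
  have h : Tendsto (fun i => (1 - c i) • (z i - a)) l (𝓝 0) := by
    refine Tendsto.zero_smul_isBoundedUnder_le ?_ ?_
    · simpa using (tendsto_const_nhds (x := (1 : ℝ))).sub hc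
    · obtain ⟨M, hM⟩ := hz
      refine ⟨M + ‖a‖, eventually_map.2 ((eventually_map.1 hM).mono fun i hi => ?_)⟩
      exact (norm_sub_le _ _).trans (by simpa using hi)
  convert h.const_add a using 2 with i
  · module
  · simp

section Complex

variable {V : Type} {K : Set (Finset V)} {v : V}

def deletion (K : Set (Finset V)) (v : V) : Set (Finset V) := {σ ∈ K | v ∉ σ}

theorem deletion_subset : deletion K v ⊆ K := fun _ hσ => hσ.1

theorem IsLowerSet.deletion (hK : IsLowerSet K) : IsLowerSet (deletion K v) :=
  fun _ _ hτ hσ => ⟨hK hτ hσ.1, fun hv => hσ.2 (hτ hv)⟩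

variable [DecidableEq V]

def closedStar (K : Set (Finset V)) (v : V) : Set (Finset V) := {σ | insert v σ ∈ K}

theorem closedStar_subset (hK : IsLowerSet K) : closedStar K v ⊆ K :=
  fun σ hσ => hK (Finset.subset_insert v σ) hσ

theorem IsLowerSet.closedStar (hK : IsLowerSet K) : IsLowerSet (closedStar K v) :=
  fun _ _ hτ hσ => hK (Finset.insert_subset_insert v hτ) hσ

theorem link_subset_deletion (hK : IsLowerSet K) : link K v ⊆ deletion K v :=
  fun σ hσ => ⟨hK (Finset.subset_insert v σ) hσ.2, hσ.1⟩

end Complex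

section Realization

variable {V : Type} [Fintype V] {K : Set (Finset V)}

noncomputable def weightSupport (x : V → ℝ) : Finset V := Finset.univ.filter fun w => x w ≠ 0

theorem mem_weightSupport {x : V → ℝ} {w : V} : w ∈ weightSupport x ↔ x w ≠ 0 := by
  simp [weightSupport]

theorem mem_realization {x : V → ℝ} :
    x ∈ realization K ↔ x ∈ stdSimplex ℝ V ∧ weightSupport x ∈ K :=
  and_assoc.symm

theorem realization_mono {L : Set (Finset V)} (h : K ⊆ L) : realization K ⊆ realization L :=
  fun _ hx => mem_realization.2 ⟨(mem_realization.1 hx).1, h (mem_realization.1 hx).2⟩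

theorem isClosed_realization (hK : IsLowerSet K) : IsClosed (realization K) := by
  have h : realization K = stdSimplex ℝ V ∩ ⋃ σ ∈ K, ⋂ w ∉ σ, {x | x w = 0} := by
    ext x
    simp only [mem_realization, mem_inter_iff, mem_iUnion, mem_iInter, mem_ofPred_eq]
    refine and_congr_right fun _ => ⟨fun hx => ⟨_, hx, fun w hw => ?_⟩, ?_⟩
    · exact not_not.1 (mt mem_weightSupport.2 hw)
    · rintro ⟨σ, hσ, hx⟩
      exact hK (fun w hw => by_contra fun hwσ => mem_weightSupport.1 hw (hx w hwσ)) hσ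
  rw [h]
  exact (isClosed_stdSimplex ℝ V).inter <| (toFinite K).isClosed_biUnion fun σ _ =>
    isClosed_biInter fun w _ => isClosed_eq (continuous_apply w) continuous_const

variable [DecidableEq V] {v : V}

theorem realization_deletion_inter_closedStar :
    realization (deletion K v) ∩ realization (closedStar K v) ⊆ realization (link K v) :=
  fun _ ⟨hB, hS⟩ => ⟨hB.1, hB.2.1, hB.2.2.2, hS.2.2⟩

theorem realization_eq_deletion_union_closedStar (hK : IsLowerSet K) :
    realization K = realization (deletion K v) ∪ realization (closedStar K v) := by
  refine Subset.antisymm (fun x hx => ?_) (union_subset (realization_mono deletion_subset)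
    (realization_mono (closedStar_subset hK)))
  rw [mem_realization] at hx
  by_cases hv : v ∈ weightSupport x
  · refine Or.inr (mem_realization.2 ⟨hx.1, ?_⟩)
    rw [closedStar, mem_ofPred_eq, Finset.insert_eq_self.2 hv]
    exact hx.2
  · exact Or.inl (mem_realization.2 ⟨hx.1, hx.2, hv⟩)

theorem apply_eq_zero_of_mem_realization_link {x : V → ℝ} (hx : x ∈ realization (link K v)) :
    x v = 0 :=
  not_not.1 (mt mem_weightSupport.2 (mem_realization.1 hx).2.1)

end Realization

section Cone

variable {V : Type} [DecidableEq V] {v : V} {x : V → ℝ}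

noncomputable def radialProjection (v : V) (x : V → ℝ) : V → ℝ :=
  (1 - x v)⁻¹ • Function.update x v 0

theorem smul_single_add_smul_radialProjection (h : x v ≠ 1) :
    x v • Pi.single v 1 + (1 - x v) • radialProjection v x = x := by
  have h' : 1 - x v ≠ 0 := sub_ne_zero.2 (Ne.symm h)
  funext w
  rcases eq_or_ne w v with rfl | hw
  · simp [radialProjection]
  · simp [radialProjection, hw, h']

theorem radialProjection_of_apply_eq_zero (h : x v = 0) : radialProjection v x = x := by
  rw [radialProjection, h, sub_zero, inv_one, one_smul, Function.update_eq_self_iff, h]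

theorem continuousOn_radialProjection : ContinuousOn (radialProjection v) {x | x v ≠ 1} := by
  have hupdate : Continuous fun x : V → ℝ => Function.update x v 0 := by fun_prop
  have hinv : ContinuousOn (fun x : V → ℝ => (1 - x v)⁻¹) {x | x v ≠ 1} :=
    (continuous_const.sub (continuous_apply v)).continuousOn.inv₀ fun x hx =>
      sub_ne_zero.2 (Ne.symm hx)
  exact hinv.smul hupdate.continuousOn

variable [Fintype V] {K : Set (Finset V)}

theorem eq_single_of_mem_stdSimplex_of_apply_eq_one (hx : x ∈ stdSimplex ℝ V) (h : x v = 1) :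
    x = Pi.single v 1 := by
  have hrest : ∑ w ∈ Finset.univ.erase v, x w = 0 := by
    linarith [Finset.add_sum_erase Finset.univ x (Finset.mem_univ v), hx.2]
  funext w
  rcases eq_or_ne w v with rfl | hw
  · simp [h]
  · rw [Pi.single_eq_of_ne hw]
    exact (Finset.sum_eq_zero_iff_of_nonneg fun i _ => hx.1 i).1 hrest w (by simp [hw])

theorem weightSupport_radialProjection (h : x v ≠ 1) :
    weightSupport (radialProjection v x) = (weightSupport x).erase v := by
  have h' : (1 - x v)⁻¹ ≠ 0 := inv_ne_zero (sub_ne_zero.2 (Ne.symm h))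
  ext w
  rcases eq_or_ne w v with rfl | hw
  · simp [mem_weightSupport, radialProjection]
  · simp [mem_weightSupport, radialProjection, hw, h']

theorem radialProjection_mem_link (hK : IsLowerSet K) (hx : x ∈ realization (closedStar K v))
    (h : x v < 1) : radialProjection v x ∈ realization (link K v) := by
  obtain ⟨⟨hx0, hx1⟩, hσ⟩ := mem_realization.1 hx
  have hpos : 0 < 1 - x v := sub_pos.2 h
  refine mem_realization.2 ⟨⟨fun w => ?_, ?_⟩, ?_⟩
  · refine mul_nonneg (inv_nonneg.2 hpos.le) ?_
    rw [Function.update_apply]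
    split_ifs
    exacts [le_rfl, hx0 w]
  · simp only [radialProjection, Pi.smul_apply, smul_eq_mul, ← Finset.mul_sum,
      Finset.sum_update_of_mem (Finset.mem_univ v)]
    rw [← Finset.sum_erase_add _ _ (Finset.mem_univ v)] at hx1
    rw [zero_add, ← Finset.erase_eq]
    field_simp
    linarith
  · rw [weightSupport_radialProjection h.ne]
    exact ⟨Finset.notMem_erase v _,
      hK (Finset.insert_subset_insert v (Finset.erase_subset v _)) hσ⟩

theorem weightSupport_smul_single_add_smul_subset (c d : ℝ) (z : V → ℝ) :
    weightSupport (c • Pi.single v 1 + d • z) ⊆ insert v (weightSupport z) := by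
  intro w hw
  rcases eq_or_ne w v with rfl | hwv
  · exact Finset.mem_insert_self _ _
  · refine Finset.mem_insert_of_mem (mem_weightSupport.2 fun hz => mem_weightSupport.1 hw ?_)
    simp [hwv, hz]

theorem smul_single_add_smul_mem_closedStar (hK : IsLowerSet K) {c : ℝ} (hc : c ∈ Icc (0 : ℝ) 1)
    {z : V → ℝ} (hz : z ∈ realization (link K v)) :
    c • Pi.single v 1 + (1 - c) • z ∈ realization (closedStar K v) := by
  obtain ⟨hzΔ, -, hzK⟩ := mem_realization.1 hz
  refine mem_realization.2 ⟨convex_stdSimplex ℝ V (single_mem_stdSimplex ℝ v) hzΔ hc.1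
    (sub_nonneg.2 hc.2) (add_sub_cancel c 1), ?_⟩
  refine hK ?_ hzK
  exact (Finset.insert_subset_insert v (weightSupport_smul_single_add_smul_subset _ _ _)).trans
    (Finset.insert_idem v _).subset

end Cone

section Deformation

variable {V : Type} [Fintype V] [DecidableEq V] {K : Set (Finset V)} {v : V}
  {p : realization (link K v)}
  (H : (ContinuousMap.id (realization (link K v))).Homotopy (ContinuousMap.const _ p))

noncomputable def linkContraction (q : ℝ × (V → ℝ)) : V → ℝ :=
  if h : q.2 ∈ realization (link K v) then H.extend q.1 ⟨q.2, h⟩ else q.2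

theorem linkContraction_mem {q : ℝ × (V → ℝ)} (h : q.2 ∈ realization (link K v)) :
    linkContraction H q ∈ realization (link K v) := by
  rw [linkContraction, dif_pos h]
  exact Subtype.prop _

theorem linkContraction_of_nonpos {s : ℝ} (hs : s ≤ 0) {y : V → ℝ}
    (hy : y ∈ realization (link K v)) : linkContraction H (s, y) = y := by
  rw [linkContraction, dif_pos hy, H.extend_apply_of_le_zero hs]
  rfl

theorem linkContraction_of_one_le {s : ℝ} (hs : 1 ≤ s) {y : V → ℝ}
    (hy : y ∈ realization (link K v)) : linkContraction H (s, y) = p := by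
  rw [linkContraction, dif_pos hy, H.extend_apply_of_one_le hs]
  rfl

theorem continuousOn_linkContraction :
    ContinuousOn (linkContraction H) (univ ×ˢ realization (link K v)) := by
  rw [continuousOn_iff_continuous_domRestrict]
  have h : ∀ q : ↥(univ ×ˢ realization (link K v)), (univ ×ˢ realization (link K v)).domRestrict
      (linkContraction H) q = H (projIcc 0 1 zero_le_one q.1.1, ⟨q.1.2, q.2.2⟩) :=
    fun q => dif_pos q.2.2
  rw [funext h]
  fun_prop

/- The clock `s t / (1 - t)` (with `t = x v`) reaches `1` already at `t = 1 / (1 + s)`, so for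
`s > 0` a whole neighbourhood of the apex is sent to the segment from `v` to `p`. This is what makes
the deformation continuous at the apex, where `radialProjection` is meaningless. -/
noncomputable def starDeformationBase (q : ℝ × (V → ℝ)) : V → ℝ :=
  if q.2 v < 1 then linkContraction H (q.1 * q.2 v / (1 - q.2 v), radialProjection v q.2) else p

noncomputable def starDeformation (q : ℝ × (V → ℝ)) : V → ℝ :=
  (q.2 v * (1 - q.1)) • Pi.single v 1 + (1 - q.2 v * (1 - q.1)) • starDeformationBase H q

variable {H}

theorem starDeformationBase_mem (hK : IsLowerSet K) {q : ℝ × (V → ℝ)}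
    (hq : q.2 ∈ realization (closedStar K v)) :
    starDeformationBase H q ∈ realization (link K v) := by
  rw [starDeformationBase]
  split_ifs with h
  · exact linkContraction_mem H (radialProjection_mem_link hK hq h)
  · exact p.2

theorem starDeformationBase_eq_of_le (hK : IsLowerSet K) {q : ℝ × (V → ℝ)}
    (hq : q.2 ∈ realization (closedStar K v)) (h : 1 - q.2 v ≤ q.1 * q.2 v) :
    starDeformationBase H q = p := by
  rw [starDeformationBase]
  split_ifs with hlt
  · refine linkContraction_of_one_le H ?_ (radialProjection_mem_link hK hq hlt)
    rwa [one_le_div (sub_pos.2 hlt)]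
  · rfl

theorem starDeformation_mem (hK : IsLowerSet K) {q : ℝ × (V → ℝ)}
    (hq : q ∈ Icc (0 : ℝ) 1 ×ˢ realization (closedStar K v)) :
    starDeformation H q ∈ realization (closedStar K v) := by
  have ht := mem_Icc_of_mem_stdSimplex (mem_realization.1 hq.2).1 v
  refine smul_single_add_smul_mem_closedStar hK ⟨?_, ?_⟩ (starDeformationBase_mem hK hq.2)
  · exact mul_nonneg ht.1 (sub_nonneg.2 hq.1.2)
  · exact mul_le_one₀ ht.2 (sub_nonneg.2 hq.1.2) (sub_le_self _ hq.1.1)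

theorem starDeformation_zero (hK : IsLowerSet K) {x : V → ℝ}
    (hx : x ∈ realization (closedStar K v)) : starDeformation H (0, x) = x := by
  have hΔ := (mem_realization.1 hx).1
  rcases (mem_Icc_of_mem_stdSimplex hΔ v).2.lt_or_eq with hlt | heq
  · rw [starDeformation, starDeformationBase, if_pos hlt, zero_mul, zero_div,
      linkContraction_of_nonpos H le_rfl (radialProjection_mem_link hK hx hlt), sub_zero, mul_one]
    exact smul_single_add_smul_radialProjection hlt.ne
  · simp [starDeformation, eq_single_of_mem_stdSimplex_of_apply_eq_one hΔ heq]

theorem starDeformation_one (x : V → ℝ) :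
    starDeformation H (1, x) = starDeformationBase H (1, x) := by
  simp [starDeformation]

theorem starDeformation_of_mem_link {x : V → ℝ} (hx : x ∈ realization (link K v)) (s : ℝ) :
    starDeformation H (s, x) = x := by
  have hxv := apply_eq_zero_of_mem_realization_link hx
  rw [starDeformation, starDeformationBase, if_pos (by simp [hxv])]
  simp only [hxv, mul_zero, zero_div, radialProjection_of_apply_eq_zero hxv,
    linkContraction_of_nonpos H le_rfl hx]
  simp

theorem continuousOn_starDeformation_of_lt_one (hK : IsLowerSet K) :
    ContinuousOn (starDeformation H)
      (Icc (0 : ℝ) 1 ×ˢ realization (closedStar K v) ∩ {q | q.2 v < 1}) := by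
  set U := Icc (0 : ℝ) 1 ×ˢ realization (closedStar K v) ∩ {q | q.2 v < 1}
  have hne : ∀ q ∈ U, 1 - q.2 v ≠ 0 := fun q hq => (sub_pos.2 hq.2).ne'
  have hinner : ContinuousOn
      (fun q : ℝ × (V → ℝ) => (q.1 * q.2 v / (1 - q.2 v), radialProjection v q.2)) U :=
    (ContinuousOn.div (by fun_prop) (by fun_prop) hne).prodMk
      (continuousOn_radialProjection.comp continuous_snd.continuousOn fun q hq => hq.2.ne)
  have hbase : ContinuousOn (starDeformationBase H) U :=
    ((continuousOn_linkContraction H).comp hinner fun q hq =>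
      ⟨mem_univ _, radialProjection_mem_link hK hq.1.2 hq.2⟩).congr fun q hq => if_pos hq.2
  have hc : Continuous fun q : ℝ × (V → ℝ) => q.2 v * (1 - q.1) := by fun_prop
  exact (hc.smul continuous_const).continuousOn.add
    ((continuous_const.sub hc).continuousOn.smul hbase)

theorem continuousWithinAt_starDeformation_zero_of_apply_eq_one (hK : IsLowerSet K)
    {x : V → ℝ} (hx : x ∈ realization (closedStar K v)) (hxv : x v = 1) :
    ContinuousWithinAt (starDeformation H) (Icc (0 : ℝ) 1 ×ˢ realization (closedStar K v))
      (0, x) := by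
  rw [ContinuousWithinAt, starDeformation_zero hK hx,
    eq_single_of_mem_stdSimplex_of_apply_eq_one (mem_realization.1 hx).1 hxv]
  have hc : Continuous fun q : ℝ × (V → ℝ) => q.2 v * (1 - q.1) := by fun_prop
  refine tendsto_smul_add_one_sub_smul_of_tendsto_one _ ?_ ?_
  · simpa using (hc.tendsto (0, Pi.single v 1)).mono_left nhdsWithin_le_nhds
  · refine isBoundedUnder_of_eventually_le (a := 1)
      (eventually_nhdsWithin_of_forall fun q hq => ?_)
    exact mem_closedBall_zero_iff.1 <| stdSimplex_subset_closedBall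
      (mem_realization.1 (starDeformationBase_mem hK hq.2)).1

theorem continuousWithinAt_starDeformation_of_pos_of_apply_eq_one (hK : IsLowerSet K)
    {s : ℝ} (hs : 0 < s) {x : V → ℝ} (hxv : x v = 1) :
    ContinuousWithinAt (starDeformation H) (Icc (0 : ℝ) 1 ×ˢ realization (closedStar K v))
      (s, x) := by
  have hopen : IsOpen {q : ℝ × (V → ℝ) | 1 - q.2 v < q.1 * q.2 v} :=
    isOpen_lt (by fun_prop) (by fun_prop)
  have hev : starDeformationBase H =ᶠ[𝓝[Icc (0 : ℝ) 1 ×ˢ realization (closedStar K v)] (s, x)]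
      fun _ => (p : V → ℝ) := by
    filter_upwards [self_mem_nhdsWithin,
      mem_nhdsWithin_of_mem_nhds (hopen.mem_nhds (by simpa [hxv] using hs))] with q hq hq'
    exact starDeformationBase_eq_of_le hK hq.2 hq'.le
  have hcont : Continuous fun q : ℝ × (V → ℝ) =>
      (q.2 v * (1 - q.1)) • Pi.single v 1 + (1 - q.2 v * (1 - q.1)) • (p : V → ℝ) := by
    fun_prop
  refine hcont.continuousWithinAt.congr_of_eventuallyEq (hev.mono fun q hq => ?_) ?_
  · simp only [starDeformation, hq]
  · simp [starDeformation, starDeformationBase, hxv]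

theorem continuousOn_starDeformation (hK : IsLowerSet K) :
    ContinuousOn (starDeformation H) (Icc (0 : ℝ) 1 ×ˢ realization (closedStar K v)) := by
  rintro ⟨s, x⟩ hq
  rcases (mem_Icc_of_mem_stdSimplex (mem_realization.1 hq.2).1 v).2.lt_or_eq with hlt | heq
  · refine (continuousOn_starDeformation_of_lt_one hK _ ⟨hq, hlt⟩).mono_of_mem_nhdsWithin
      (inter_mem_nhdsWithin _ ((isOpen_lt (by fun_prop) continuous_const).mem_nhds hlt))
  · rcases hq.1.1.eq_or_lt with rfl | hs
    · exact continuousWithinAt_starDeformation_zero_of_apply_eq_one hK hq.2 heq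
    · exact continuousWithinAt_starDeformation_of_pos_of_apply_eq_one hK hs heq

variable (H) in
theorem isStrongDeformationRetraction_starDeformation (hK : IsLowerSet K) :
    IsStrongDeformationRetraction (starDeformation H) (realization (closedStar K v))
      (realization (link K v)) where
  continuousOn := continuousOn_starDeformation hK
  mapsTo _ hq := starDeformation_mem hK hq
  apply_zero _ hx := starDeformation_zero hK hx
  apply_one_mem x hx := starDeformation_one x ▸ starDeformationBase_mem hK hx
  apply_of_mem t _ _ ha := starDeformation_of_mem_link ha t

end Deformation

theorem homotopyEquiv_of_contractible_link_general {V : Type} [Fintype V] [DecidableEq V]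
    (K : Set (Finset V))
    (hdown : ∀ σ ∈ K, ∀ τ ⊆ σ, τ ∈ K)
    (v : V)
    (hlink : ContractibleSpace ↥(realization (link K v))) :
    Nonempty (ContinuousMap.HomotopyEquiv
      ↥(realization K) ↥(realization {σ ∈ K | v ∉ σ})) := by
  obtain ⟨p, ⟨H⟩⟩ := id_nullhomotopic (realization (link K v))
  have hK : IsLowerSet K := fun σ τ hτ hσ => hdown σ hσ τ hτ
  have hcollapse := (isStrongDeformationRetraction_starDeformation H hK).union
    (realization_mono (link_subset_deletion hK)) realization_deletion_inter_closedStar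
    (isClosed_realization hK.deletion) (isClosed_realization hK.closedStar)
  rw [realization_eq_deletion_union_closedStar hK]
  exact hcollapse.homotopyEquiv subset_union_left

/-- If the link of a vertex `v` of a simplicial complex `K` is contractible,
then the geometric realization of `K` is homotopy equivalent to that of the
subcomplex `K \ St v` obtained by removing the (open) star of `v`. -/
theorem homotopyEquiv_of_contractible_link {V : Type} [Fintype V] [DecidableEq V]
    (K : Set (Finset V))
    (hdown : ∀ σ ∈ K, ∀ τ ⊆ σ, τ ∈ K)
    (v : V) (hv : {v} ∈ K)
    (hlink : ContractibleSpace ↥(realization (link K v))) :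
    Nonempty (ContinuousMap.HomotopyEquiv
      ↥(realization K) ↥(realization {σ ∈ K | v ∉ σ})) :=
  homotopyEquiv_of_contractible_link_general K hdown v hlink
end

section
/- Let K_{B_n} be the simplicial complex whose vertices are the nonempty subsets I of {±1, ..., ±n} satisfying (i ∈ I ⟹ -i ∉ I), and whose faces are collections of such subsets that are totally ordered by inclusion (nested chains). Then K_{B_n} is a simplicial sphere of dimension n-1; in particular, every maximal face has exactly n elements. -/
open scoped Classical

/-- An admissible subset `I` of `[±n] = {±1, …, ±n}` (nonempty, with `i ∈ I → -i ∉ I`),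
encoded as a function `Fin n → Option Bool`: `some true` at `i` means `i+1 ∈ I`,
`some false` means `-(i+1) ∈ I`, and `none` means neither. -/
def Adm (n : ℕ) : Type := {f : Fin n → Option Bool // f ≠ fun _ => none}

/-- Admissible subsets are ordered by inclusion. -/
instance (n : ℕ) : PartialOrder (Adm n) where
  le f g := ∀ i b, f.1 i = some b → g.1 i = some b
  le_refl f i b h := h
  le_trans f g h hfg hgh i b hi := hgh i b (hfg i b hi)
  le_antisymm := by
    rintro ⟨f, hf⟩ ⟨g, hg⟩ hfg hgf
    refine Subtype.ext (funext fun i => ?_)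
    show f i = g i
    rcases hfi : f i with _ | b
    · rcases hgi : g i with _ | b
      · rfl
      · exact absurd (hgf i b hgi) (by show ¬ f i = some b; rw [hfi]; simp)
    · exact (hfg i b hfi).symm

noncomputable instance (n : ℕ) : Fintype (Adm n) := by
  unfold Adm; exact Subtype.fintype _

/-- The number of elements of the admissible set (the cardinality `|I|`). -/
noncomputable def Adm.size {n : ℕ} (f : Adm n) : ℕ :=
  (Finset.univ.filter fun i => f.1 i ≠ none).card

/-- `I^± = (I ∪ -I) ∩ [n]`, as a subset of `Fin n`. -/
noncomputable def Adm.supp {n : ℕ} (f : Adm n) : Finset (Fin n) :=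
  Finset.univ.filter fun i => f.1 i ≠ none

/-- The faces of the order complex on the vertices satisfying `P`:
finite chains (under inclusion) of admissible sets satisfying `P`. -/
def chainComplex {n : ℕ} (P : Adm n → Prop) : Set (Finset (Adm n)) :=
  {σ | (∀ I ∈ σ, P I) ∧ IsChain (· ≤ ·) (σ : Set (Adm n))}

/-- The base point of the `d`-sphere. -/
noncomputable def spherePt (d : ℕ) :
    Metric.sphere (0 : EuclideanSpace ℝ (Fin (d + 1))) 1 :=
  ⟨EuclideanSpace.single 0 1, by simp⟩

def IsWedgeBase (r d : ℕ)
    (x : Unit ⊕ (Fin r × Metric.sphere (0 : EuclideanSpace ℝ (Fin (d + 1))) 1)) : Prop :=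
  x = Sum.inl () ∨ ∃ i, x = Sum.inr (i, spherePt d)

noncomputable def wedgeSetoid (r d : ℕ) :
    Setoid (Unit ⊕ (Fin r × Metric.sphere (0 : EuclideanSpace ℝ (Fin (d + 1))) 1)) where
  r x y := x = y ∨ (IsWedgeBase r d x ∧ IsWedgeBase r d y)
  iseqv := by
    constructor
    · intro x; exact Or.inl rfl
    · rintro x y (rfl | ⟨hx, hy⟩); exacts [Or.inl rfl, Or.inr ⟨hy, hx⟩]
    · rintro x y z (rfl | ⟨hx, hy⟩) (rfl | ⟨hy', hz⟩)
      · exact Or.inl rfl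
      · exact Or.inr ⟨hy', hz⟩
      · exact Or.inr ⟨hx, hy⟩
      · exact Or.inr ⟨hx, hz⟩

/-- The wedge of `r` copies of the `d`-sphere (a single point when `r = 0`). -/
noncomputable def WedgeOfSpheres (r d : ℕ) : Type := Quotient (wedgeSetoid r d)

noncomputable instance (r d : ℕ) : TopologicalSpace (WedgeOfSpheres r d) :=
  instTopologicalSpaceQuotient

/-!
Sizes strictly increase along a chain of admissible sets, and next to any chain one can insert an
admissible set of any missing size between `1` and `n`; so a maximal chain has exactly one set of
each size `1, …, n`.

For the sphere, send a point `w` of the realization to `∑ w_I e_I / |I|`, where `e_I` is the signed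
indicator vector of `I`. As the support of `w` is a chain, signs never cancel, and the image lies on
the boundary `∑ |x_i| = 1` of the cross-polytope. Conversely `x` is the combination of its signed
level sets `I = {i : v ≤ |x_i|}`, the level `v` carrying weight `|I| (v - v')` with `v'` the next
smaller value of `|x|`; this inverts the map. A continuous bijection from the compact realization
is a homeomorphism, and radial projection takes the cross-polytope boundary onto the round sphere.
-/

open Finset

theorem IsChain.exists_forall_le {α : Type*} [PartialOrder α] {s : Finset α}
    (hs : IsChain (· ≤ ·) (s : Set α)) (hne : s.Nonempty) : ∃ m ∈ s, ∀ a ∈ s, m ≤ a := by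
  obtain ⟨m, hm, hmin⟩ := s.exists_minimal hne
  exact ⟨m, hm, fun a ha => (hs.total hm ha).elim id fun h => hmin ha h⟩

theorem IsChain.exists_forall_ge {α : Type*} [PartialOrder α] {s : Finset α}
    (hs : IsChain (· ≤ ·) (s : Set α)) (hne : s.Nonempty) : ∃ m ∈ s, ∀ a ∈ s, a ≤ m := by
  obtain ⟨m, hm, hmax⟩ := s.exists_maximal hne
  exact ⟨m, hm, fun a ha => (hs.total ha hm).elim id fun h => hmax ha h⟩

namespace Adm

variable {n : ℕ}

def Extends (f g : Fin n → Option Bool) : Prop := ∀ i b, f i = some b → g i = some b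

theorem le_iff_extends {I J : Adm n} : I ≤ J ↔ Extends I.1 J.1 := Iff.rfl

theorem Extends.trans {f g h : Fin n → Option Bool} (hfg : Extends f g) (hgh : Extends g h) :
    Extends f h := fun i b hf => hgh i b (hfg i b hf)

theorem Extends.support_subset {f g : Fin n → Option Bool} (h : Extends f g) :
    univ.filter (f · ≠ none) ⊆ univ.filter (g · ≠ none) := by
  intro i
  simp only [mem_filter, mem_univ, true_and, Option.ne_none_iff_exists']
  exact fun ⟨b, hb⟩ => ⟨b, h i b hb⟩

theorem eq_of_le_of_size_le {I J : Adm n} (h : I ≤ J) (hs : J.size ≤ I.size) : I = J := by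
  have hsupp := eq_of_subset_of_card_le (Extends.support_subset h) hs
  refine Subtype.ext (funext fun i => ?_)
  rcases hIi : I.1 i with _ | b
  · have : i ∉ univ.filter (J.1 · ≠ none) := by rw [← hsupp]; simp [hIi]
    simpa [eq_comm] using this
  · exact (h i b hIi).symm

theorem size_le_size {I J : Adm n} (h : I ≤ J) : I.size ≤ J.size :=
  card_le_card (Extends.support_subset h)

theorem size_lt_size {I J : Adm n} (h : I < J) : I.size < J.size :=
  (size_le_size h.le).lt_of_ne
    fun he => h.ne (eq_of_le_of_size_le h.le he.ge)

theorem exists_ne_none (I : Adm n) : ∃ i, I.1 i ≠ none := by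
  by_contra! h
  exact I.2 (funext h)

theorem exists_ne_none_and_eq_none_of_lt {I J : Adm n} (h : I < J) :
    ∃ i, J.1 i ≠ none ∧ I.1 i = none := by
  by_contra! hno
  exact (size_lt_size h).not_ge (card_le_card fun i hi => by simpa using hno i (by simpa using hi))

theorem one_le_size (I : Adm n) : 1 ≤ I.size :=
  card_pos.2 (I.exists_ne_none.imp fun _ hi => by simpa using hi)

theorem size_le (I : Adm n) : I.size ≤ n :=
  (card_le_univ _).trans_eq (Fintype.card_fin n)

theorem exists_size_eq_between {f g : Fin n → Option Bool} (hfg : Extends f g) {k : ℕ}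
    (hk : 1 ≤ k) (hfk : #(univ.filter (f · ≠ none)) ≤ k)
    (hkg : k ≤ #(univ.filter (g · ≠ none))) :
    ∃ K : Adm n, Extends f K.1 ∧ Extends K.1 g ∧ K.size = k := by
  obtain ⟨C, hfC, hCg, hC⟩ := exists_subsuperset_card_eq hfg.support_subset hfk hkg
  have hsupp : univ.filter (fun i => (if i ∈ C then g i else none) ≠ none) = C := by
    ext i
    by_cases hi : i ∈ C
    · simpa [hi] using mem_filter.1 (hCg hi)
    · simp [hi]
  have hne : (fun i => if i ∈ C then g i else none) ≠ fun _ => none := by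
    obtain ⟨i, hi⟩ := card_pos.1 (hC ▸ hk)
    intro h
    have := congrFun h i
    simp only [hi, if_true] at this
    exact (mem_filter.1 (hCg hi)).2 this
  refine ⟨⟨_, hne⟩, fun i b hb => ?_, fun i b hb => ?_, (congrArg card hsupp).trans hC⟩
  · have hi : i ∈ C := hfC (by simp [hb])
    simpa [hi] using hfg i b hb
  · by_cases hi : i ∈ C <;> simp_all

theorem exists_extends_below_of_chain {σ : Finset (Adm n)}
    (hσ : IsChain (· ≤ ·) (σ : Set (Adm n))) (k : ℕ) :
    ∃ f : Fin n → Option Bool, #(univ.filter (f · ≠ none)) ≤ k ∧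
      ∀ J ∈ σ, (J.size < k → Extends J.1 f) ∧ (k < J.size → Extends f J.1) := by
  by_cases hne : (σ.filter (·.size < k)).Nonempty
  · obtain ⟨M, hM, hM_max⟩ := (hσ.mono (coe_subset.2 (filter_subset _ σ))).exists_forall_ge hne
    obtain ⟨hMσ, hMk⟩ := mem_filter.1 hM
    refine ⟨M.1, hMk.le, fun J hJ => ⟨fun h => hM_max J (mem_filter.2 ⟨hJ, h⟩), fun h => ?_⟩⟩
    exact (hσ.total hMσ hJ).resolve_right fun hJM => (size_le_size hJM).not_gt (hMk.trans h)
  · exact ⟨fun _ => none, by simp, fun J hJ =>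
      ⟨fun h => absurd ⟨J, mem_filter.2 ⟨hJ, h⟩⟩ hne, fun _ i b hb => by simp at hb⟩⟩

theorem exists_extends_above_of_chain {σ : Finset (Adm n)}
    (hσ : IsChain (· ≤ ·) (σ : Set (Adm n))) {k : ℕ} (hkn : k ≤ n) {f : Fin n → Option Bool}
    (hf : ∀ J ∈ σ, k < J.size → Extends f J.1) :
    ∃ g : Fin n → Option Bool, k ≤ #(univ.filter (g · ≠ none)) ∧ Extends f g ∧
      ∀ J ∈ σ, k < J.size → Extends g J.1 := by
  by_cases hne : (σ.filter (k < ·.size)).Nonempty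
  · obtain ⟨m, hm, hm_min⟩ := (hσ.mono (coe_subset.2 (filter_subset _ σ))).exists_forall_le hne
    obtain ⟨hmσ, hkm⟩ := mem_filter.1 hm
    exact ⟨m.1, hkm.le, hf m hmσ hkm, fun J hJ h => hm_min J (mem_filter.2 ⟨hJ, h⟩)⟩
  · exact ⟨fun i => some ((f i).getD true), by simpa using hkn, fun i b hb => by simp [hb],
      fun J hJ h => absurd ⟨J, mem_filter.2 ⟨hJ, h⟩⟩ hne⟩

theorem exists_mem_size_eq_of_maximal {σ : Finset (Adm n)}
    (hσ : IsChain (· ≤ ·) (σ : Set (Adm n)))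
    (hmax : ∀ τ : Finset (Adm n), IsChain (· ≤ ·) (τ : Set (Adm n)) → σ ⊆ τ → σ = τ)
    {k : ℕ} (hk : 1 ≤ k) (hkn : k ≤ n) : ∃ I ∈ σ, I.size = k := by
  by_contra! hσk
  obtain ⟨f, hfk, hf⟩ := exists_extends_below_of_chain hσ k
  obtain ⟨g, hkg, hfg, hg⟩ := exists_extends_above_of_chain hσ hkn fun J hJ => (hf J hJ).2
  obtain ⟨K, hfK, hKg, hK⟩ := exists_size_eq_between hfg hk hfk hkg
  have hK_comparable : ∀ J ∈ σ, J ≠ K → J ≤ K ∨ K ≤ J := fun J hJ _ =>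
    (hσk J hJ).lt_or_gt.imp (fun h => ((hf J hJ).1 h).trans hfK) fun h => hKg.trans (hg J hJ h)
  have hinsert := hmax (insert K σ)
    (by simpa using hσ.insert fun J hJ hne => (hK_comparable J hJ hne.symm).symm)
    (subset_insert K σ)
  exact hσk K (hinsert ▸ mem_insert_self K σ) hK

theorem card_eq_of_maximal {σ : Finset (Adm n)} (hσ : IsChain (· ≤ ·) (σ : Set (Adm n)))
    (hmax : ∀ τ : Finset (Adm n), IsChain (· ≤ ·) (τ : Set (Adm n)) → σ ⊆ τ → σ = τ) :
    #σ = n := by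
  have hinj : Set.InjOn Adm.size (σ : Set (Adm n)) := fun I hI J hJ hIJ => by
    by_contra hne
    rcases hσ hI hJ hne with h | h
    · exact (size_lt_size (h.lt_of_ne hne)).ne hIJ
    · exact (size_lt_size (h.lt_of_ne (Ne.symm hne))).ne hIJ.symm
  have himage : σ.image Adm.size = Icc 1 n := by
    ext k
    simp only [mem_image, mem_Icc]
    refine ⟨?_, fun ⟨hk, hkn⟩ => exists_mem_size_eq_of_maximal hσ hmax hk hkn⟩
    rintro ⟨I, -, rfl⟩
    exact ⟨one_le_size I, size_le I⟩
  simpa [himage] using (card_image_of_injOn hinj).symm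

end Adm

noncomputable def predBelow (S : Finset ℝ) (v : ℝ) : ℝ :=
  (insert 0 (S.filter (· < v))).max' (insert_nonempty _ _)

theorem predBelow_eq {S : Finset ℝ} {v p : ℝ} (hp0 : 0 ≤ p) (hp : p = 0 ∨ p ∈ S ∧ p < v)
    (hle : ∀ s ∈ S, s < v → s ≤ p) : predBelow S v = p := by
  rw [predBelow, max'_eq_iff]
  refine ⟨by simpa using hp, fun s hs => ?_⟩
  rcases mem_insert.1 hs with rfl | hs
  · exact hp0
  · exact hle s (mem_filter.1 hs).1 (mem_filter.1 hs).2

theorem predBelow_lt {S : Finset ℝ} {v : ℝ} (hv : 0 < v) : predBelow S v < v :=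
  (max'_lt_iff _ _).2 fun _ hs => (mem_insert.1 hs).elim (· ▸ hv) fun h => (mem_filter.1 h).2

theorem sum_sub_predBelow {S : Finset ℝ} (hS : ∀ v ∈ S, 0 < v) {t : ℝ} (ht : t ∈ S) :
    ∑ v ∈ S.filter (· ≤ t), (v - predBelow S v) = t := by
  induction hk : #(S.filter (· < t)) using Nat.strong_induction_on generalizing t with
  | _ k ih =>
  rcases (S.filter (· < t)).eq_empty_or_nonempty with hempty | hne
  · have hS_le : S.filter (· ≤ t) = {t} := by
      ext s
      have : s ∈ S → ¬s < t := fun hs hst =>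
        eq_empty_iff_forall_notMem.1 hempty s (mem_filter.2 ⟨hs, hst⟩)
      simp only [mem_filter, mem_singleton]
      exact ⟨fun ⟨hs, hst⟩ => le_antisymm hst (not_lt.1 (this hs)), fun h => ⟨h ▸ ht, h.le⟩⟩
    have hpred : predBelow S t = 0 := predBelow_eq le_rfl (.inl rfl) fun s hs hst =>
      absurd (mem_filter.2 ⟨hs, hst⟩) (hempty ▸ notMem_empty s)
    rw [hS_le, sum_singleton, hpred, sub_zero]
  · set p := (S.filter (· < t)).max' hne
    obtain ⟨hpS, hpt⟩ := mem_filter.1 (max'_mem _ hne)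
    have hpred : predBelow S t = p := predBelow_eq (hS p hpS).le (.inr ⟨hpS, hpt⟩)
      fun s hs hst => le_max' _ s (mem_filter.2 ⟨hs, hst⟩)
    have hS_le : S.filter (· ≤ t) = insert t (S.filter (· ≤ p)) := by
      ext s
      simp only [mem_filter, mem_insert]
      constructor
      · rintro ⟨hs, hst⟩
        exact hst.eq_or_lt.imp id fun hst => ⟨hs, le_max' _ s (mem_filter.2 ⟨hs, hst⟩)⟩
      · rintro (rfl | ⟨hs, hsp⟩)
        exacts [⟨ht, le_rfl⟩, ⟨hs, hsp.trans hpt.le⟩]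
    have hcard : #(S.filter (· < p)) < k := hk ▸ card_lt_card
      ⟨fun s hs => mem_filter.2 ⟨(mem_filter.1 hs).1, (mem_filter.1 hs).2.trans hpt⟩,
        fun h => (mem_filter.1 (h (mem_filter.2 ⟨hpS, hpt⟩))).2.false⟩
    rw [hS_le, sum_insert fun h => (mem_filter.1 h).2.not_gt hpt, ih _ hcard hpS rfl, hpred,
      sub_add_cancel]

variable {n : ℕ}

def signVal : Option Bool → ℝ
  | some true => 1
  | some false => -1
  | none => 0

/-- The barycenter of the face of the boundary of the cross-polytope spanned by the signed unit
vectors in `I`. -/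
noncomputable def Adm.vertex (I : Adm n) : Fin n → ℝ := fun i => signVal (I.1 i) / I.size

noncomputable def crossMap (w : Adm n → ℝ) : Fin n → ℝ := ∑ I, w I • I.vertex

noncomputable def absValues (x : Fin n → ℝ) : Finset ℝ := (univ.filter (x · ≠ 0)).image (|x ·|)

noncomputable def levelSet (x : Fin n → ℝ) (v : ℝ) : Fin n → Option Bool :=
  fun i => if v ≤ |x i| then some (decide (0 < x i)) else none

/-- The inverse of `crossMap`: the layer-cake decomposition of `x` into its signed level sets. -/
noncomputable def barycentricOf (x : Fin n → ℝ) (I : Adm n) : ℝ :=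
  ∑ v ∈ absValues x, if I.1 = levelSet x v then (v - predBelow (absValues x) v) * I.size else 0

theorem Adm.size_pos (I : Adm n) : (0 : ℝ) < I.size := by exact_mod_cast I.one_le_size

theorem crossMap_apply (w : Adm n → ℝ) (i : Fin n) :
    crossMap w i = ∑ I, w I * signVal (I.1 i) / I.size := by
  simp [crossMap, Adm.vertex, mul_div_assoc]

theorem pos_of_mem_absValues {x : Fin n → ℝ} {v : ℝ} (hv : v ∈ absValues x) : 0 < v := by
  obtain ⟨i, hi, rfl⟩ := mem_image.1 hv
  exact abs_pos.2 (mem_filter.1 hi).2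

theorem exists_val_eq_levelSet {x : Fin n → ℝ} {v : ℝ} (hv : v ∈ absValues x) :
    ∃ J : Adm n, J.1 = levelSet x v := by
  obtain ⟨i, -, rfl⟩ := mem_image.1 hv
  exact ⟨⟨levelSet x _, fun h => by simpa [levelSet] using congrFun h i⟩, rfl⟩

theorem Adm.sum_ite_val_eq (J : Adm n) (F : Adm n → ℝ) :
    ∑ I : Adm n, (if I.1 = J.1 then F I else 0) = F J := by
  simp_rw [show ∀ I : Adm n, I.1 = J.1 ↔ I = J from fun I => ⟨Subtype.ext, congrArg _⟩]
  simp

theorem sum_filter_le_abs_sub_predBelow (x : Fin n → ℝ) (i : Fin n) :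
    ∑ v ∈ (absValues x).filter (· ≤ |x i|), (v - predBelow (absValues x) v) = |x i| := by
  by_cases hxi : x i = 0
  · rw [hxi, abs_zero, sum_eq_zero]
    intro v hv
    exact absurd (mem_filter.1 hv).2 (pos_of_mem_absValues (mem_filter.1 hv).1).not_ge
  · exact sum_sub_predBelow (fun v => pos_of_mem_absValues) (mem_image.2 ⟨i, by simpa, rfl⟩)

theorem sum_barycentricOf_mul (x : Fin n → ℝ) (F : Adm n → ℝ) :
    ∑ I, barycentricOf x I * F I = ∑ v ∈ absValues x, (v - predBelow (absValues x) v) *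
      ∑ I : Adm n, if I.1 = levelSet x v then I.size * F I else 0 := by
  simp_rw [barycentricOf, sum_mul, mul_sum]
  rw [sum_comm]
  refine sum_congr rfl fun v _ => sum_congr rfl fun I _ => ?_
  split_ifs <;> ring

theorem crossMap_barycentricOf (x : Fin n → ℝ) : crossMap (barycentricOf x) = x := by
  funext i
  have hsign : ∀ v ∈ absValues x, ∑ I : Adm n,
      (if I.1 = levelSet x v then I.size * (signVal (I.1 i) / I.size) else 0) =
      if v ≤ |x i| then signVal (some (decide (0 < x i))) else 0 := by
    intro v hv
    obtain ⟨J, hJ⟩ := exists_val_eq_levelSet hv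
    rw [← hJ, J.sum_ite_val_eq, mul_div_cancel₀ _ J.size_pos.ne', hJ, levelSet]
    split_ifs <;> rfl
  simp_rw [crossMap_apply, mul_div_assoc, sum_barycentricOf_mul]
  rw [sum_congr rfl fun v hv => by rw [hsign v hv]]
  simp_rw [mul_ite, mul_zero]
  rw [← sum_filter, ← sum_mul, sum_filter_le_abs_sub_predBelow]
  rcases lt_or_ge 0 (x i) with h | h
  · simp [signVal, h, abs_of_pos h]
  · simp [signVal, h.not_gt, abs_of_nonpos h]

theorem sum_barycentricOf (x : Fin n → ℝ) : ∑ I, barycentricOf x I = ∑ i, |x i| := by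
  have hsize : ∀ v ∈ absValues x, ∑ I : Adm n,
      (if I.1 = levelSet x v then (I.size : ℝ) else 0) = ∑ i, if v ≤ |x i| then 1 else 0 := by
    intro v hv
    obtain ⟨J, hJ⟩ := exists_val_eq_levelSet hv
    rw [← hJ, J.sum_ite_val_eq, Adm.size, hJ, card_filter, Nat.cast_sum]
    refine sum_congr rfl fun i _ => ?_
    by_cases h : v ≤ |x i| <;> simp [levelSet, h]
  have := sum_barycentricOf_mul x 1
  simp only [Pi.one_apply, mul_one] at this
  rw [this, sum_congr rfl fun v hv => by rw [hsize v hv]]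
  simp_rw [mul_sum, mul_ite, mul_one, mul_zero]
  rw [sum_comm]
  exact sum_congr rfl fun i _ => by rw [← sum_filter, sum_filter_le_abs_sub_predBelow]

structure IsChainWeight (w : Adm n → ℝ) : Prop where
  nonneg : ∀ I, 0 ≤ w I
  comparable : ∀ {I J}, w I ≠ 0 → w J ≠ 0 → I ≤ J ∨ J ≤ I

theorem levelSet_anti {x : Fin n → ℝ} {v v' : ℝ} (h : v ≤ v') :
    Adm.Extends (levelSet x v') (levelSet x v) := fun i b hb => by
  simp only [levelSet] at hb ⊢
  split_ifs at hb with hv'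
  rwa [if_pos (h.trans hv')]

theorem isChainWeight_barycentricOf (x : Fin n → ℝ) : IsChainWeight (barycentricOf x) where
  nonneg I := sum_nonneg fun v hv => by
    split_ifs
    exacts [mul_nonneg (sub_nonneg.2 (predBelow_lt (pos_of_mem_absValues hv)).le) I.size_pos.le,
      le_rfl]
  comparable {I J} hI hJ := by
    obtain ⟨v, -, hv⟩ := exists_ne_zero_of_sum_ne_zero hI
    obtain ⟨v', -, hv'⟩ := exists_ne_zero_of_sum_ne_zero hJ
    rw [ne_eq, ite_eq_right_iff, not_forall] at hv hv'
    obtain ⟨hIv, -⟩ := hv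
    obtain ⟨hJv', -⟩ := hv'
    rw [Adm.le_iff_extends, Adm.le_iff_extends, hIv, hJv']
    exact (le_total v v').symm.imp levelSet_anti levelSet_anti

noncomputable def weightAbove (w : Adm n → ℝ) (I : Adm n) : ℝ :=
  ∑ J ∈ univ.filter (I ≤ ·), w J / J.size

theorem weightAbove_eq_add (w : Adm n → ℝ) (I : Adm n) :
    weightAbove w I = w I / I.size + ∑ J ∈ univ.filter (I < ·), w J / J.size := by
  have : univ.filter (I ≤ ·) = insert I (univ.filter (I < ·)) := by
    ext J
    simp [le_iff_eq_or_lt, eq_comm]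
  rw [weightAbove, this, sum_insert (by simp)]

theorem crossMap_apply_eq_zero {w : Adm n → ℝ} {i : Fin n} (h : ∀ K, w K ≠ 0 → K.1 i = none) :
    crossMap w i = 0 := by
  rw [crossMap_apply]
  refine sum_eq_zero fun K _ => ?_
  by_cases hK : w K = 0
  · simp [hK]
  · simp [h K hK, signVal]

theorem crossMap_apply_of_least {w : Adm n → ℝ} {i : Fin n} {J : Adm n} (hJi : J.1 i ≠ none)
    (hleast : ∀ K, w K ≠ 0 → K.1 i ≠ none → J ≤ K) :
    crossMap w i = signVal (J.1 i) * weightAbove w J := by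
  obtain ⟨b, hb⟩ := Option.ne_none_iff_exists'.1 hJi
  rw [crossMap_apply, weightAbove, mul_sum, sum_filter]
  refine sum_congr rfl fun K _ => ?_
  by_cases hJK : J ≤ K
  · rw [if_pos hJK, hJK i b hb, hb]
    ring
  · by_cases hK : w K = 0
    · simp [hK, hJK]
    · have hKi : K.1 i = none := by_contra fun hKi => hJK (hleast K hK hKi)
      simp [hJK, hKi, signVal]

theorem levelSet_apply_of_eq {x : Fin n → ℝ} {i : Fin n} {b : Bool} {t : ℝ} (ht : 0 < t)
    (hx : x i = signVal (some b) * t) (v : ℝ) :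
    levelSet x v i = if v ≤ t then some b else none := by
  cases b <;> simp [levelSet, signVal, hx, ht, abs_of_pos, ht.not_gt]

namespace IsChainWeight

variable {w : Adm n → ℝ} (hw : IsChainWeight w)
include hw

theorem isChain {s : Finset (Adm n)} (hs : ∀ I ∈ s, w I ≠ 0) : IsChain (· ≤ ·) (s : Set (Adm n)) :=
  fun I hI J hJ _ => hw.comparable (hs I hI) (hs J hJ)

theorem weightAbove_pos {I : Adm n} (hI : w I ≠ 0) : 0 < weightAbove w I := by
  rw [weightAbove_eq_add]
  exact add_pos_of_pos_of_nonneg (div_pos ((hw.nonneg I).lt_of_ne' hI) I.size_pos)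
    (sum_nonneg fun J _ => div_nonneg (hw.nonneg J) J.size_pos.le)

theorem weightAbove_le_of_le {I J : Adm n} (h : I ≤ J) : weightAbove w J ≤ weightAbove w I :=
  sum_le_sum_of_subset_of_nonneg (fun K hK => by simpa using h.trans (by simpa using hK))
    fun K _ _ => div_nonneg (hw.nonneg K) K.size_pos.le

theorem weightAbove_le_of_lt {I J : Adm n} (h : I < J) :
    weightAbove w J ≤ weightAbove w I - w I / I.size := by
  rw [weightAbove_eq_add w I, add_sub_cancel_left]
  exact sum_le_sum_of_subset_of_nonneg (fun K hK => by simpa using h.trans_le (by simpa using hK))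
    fun K _ _ => div_nonneg (hw.nonneg K) K.size_pos.le

theorem weightAbove_lt_of_lt {I J : Adm n} (hI : w I ≠ 0) (h : I < J) :
    weightAbove w J < weightAbove w I :=
  (hw.weightAbove_le_of_lt h).trans_lt
    (sub_lt_self _ (div_pos ((hw.nonneg I).lt_of_ne' hI) I.size_pos))

theorem exists_least_mem_supp {i : Fin n} (h : ∃ K, w K ≠ 0 ∧ K.1 i ≠ none) :
    ∃ J, w J ≠ 0 ∧ J.1 i ≠ none ∧ ∀ K, w K ≠ 0 → K.1 i ≠ none → J ≤ K := by
  obtain ⟨K, hK⟩ := h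
  obtain ⟨J, hJ, hleast⟩ := (hw.isChain (s := univ.filter fun K => w K ≠ 0 ∧ K.1 i ≠ none)
    fun K hK => (mem_filter.1 hK).2.1).exists_forall_le ⟨K, by simpa using hK⟩
  simp only [mem_filter, mem_univ, true_and] at hJ hleast
  exact ⟨J, hJ.1, hJ.2, fun K hK hKi => hleast K ⟨hK, hKi⟩⟩

theorem levelSet_crossMap_weightAbove {I : Adm n} (hI : w I ≠ 0) :
    levelSet (crossMap w) (weightAbove w I) = I.1 := by
  funext i
  by_cases h : ∃ K, w K ≠ 0 ∧ K.1 i ≠ none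
  · obtain ⟨J, hJ, hJi, hleast⟩ := hw.exists_least_mem_supp h
    obtain ⟨b, hb⟩ := Option.ne_none_iff_exists'.1 hJi
    rw [levelSet_apply_of_eq (hw.weightAbove_pos hJ)
      (hb ▸ crossMap_apply_of_least hJi hleast)]
    rcases hIi : I.1 i with _ | c
    · have hIJ : I < J := ((hw.comparable hI hJ).resolve_right fun hJI => by
        simp [hJI i b hb] at hIi).lt_of_ne fun h => by simp [h, hb] at hIi
      exact if_neg (hw.weightAbove_lt_of_lt hI hIJ).not_ge
    · rw [if_pos (hw.weightAbove_le_of_le (hleast I hI (by simp [hIi]))),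
        ← hleast I hI (by simp [hIi]) i b hb, hIi]
  · push Not at h
    rw [levelSet, crossMap_apply_eq_zero h, abs_zero,
      if_neg (hw.weightAbove_pos hI).not_ge, h I hI]

theorem exists_least_eq {I : Adm n} (hI : w I ≠ 0) :
    ∃ i, I.1 i ≠ none ∧ ∀ K, w K ≠ 0 → K.1 i ≠ none → I ≤ K := by
  obtain ⟨i, hIi, hbelow⟩ : ∃ i, I.1 i ≠ none ∧ ∀ K, w K ≠ 0 → K < I → K.1 i = none := by
    set L := univ.filter fun K => w K ≠ 0 ∧ K < I
    rcases L.eq_empty_or_nonempty with hL | hL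
    · obtain ⟨i, hi⟩ := I.exists_ne_none
      exact ⟨i, hi, fun K hK hKI =>
        absurd (mem_filter.2 ⟨mem_univ K, hK, hKI⟩) (hL ▸ notMem_empty K)⟩
    · obtain ⟨P, hP, hP_max⟩ :=
        (hw.isChain (s := L) fun K hK => (mem_filter.1 hK).2.1).exists_forall_ge hL
      obtain ⟨i, hIi, hPi⟩ := Adm.exists_ne_none_and_eq_none_of_lt (mem_filter.1 hP).2.2
      refine ⟨i, hIi, fun K hK hKI => ?_⟩
      rcases hKi : K.1 i with _ | b
      · rfl
      · simpa [hPi] using hP_max K (mem_filter.2 ⟨mem_univ K, hK, hKI⟩) i b hKi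
  refine ⟨i, hIi, fun K hK hKi => ?_⟩
  by_contra hIK
  exact hKi (hbelow K hK (((hw.comparable hI hK).resolve_left hIK).lt_of_ne fun h => hIK h.ge))

theorem absValues_crossMap :
    absValues (crossMap w) = (univ.filter (w · ≠ 0)).image (weightAbove w) := by
  ext v
  simp only [absValues, mem_image, mem_filter, mem_univ, true_and]
  constructor
  · rintro ⟨i, hi, rfl⟩
    have h : ∃ K, w K ≠ 0 ∧ K.1 i ≠ none := by
      by_contra! h
      exact hi (crossMap_apply_eq_zero h)
    obtain ⟨J, hJ, hJi, hleast⟩ := hw.exists_least_mem_supp h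
    obtain ⟨b, hb⟩ := Option.ne_none_iff_exists'.1 hJi
    refine ⟨J, hJ, ?_⟩
    rw [crossMap_apply_of_least hJi hleast, hb, abs_mul, abs_of_pos (hw.weightAbove_pos hJ)]
    cases b <;> simp [signVal]
  · rintro ⟨I, hI, rfl⟩
    obtain ⟨i, hIi, hleast⟩ := hw.exists_least_eq hI
    obtain ⟨b, hb⟩ := Option.ne_none_iff_exists'.1 hIi
    have hx := crossMap_apply_of_least hIi hleast
    rw [hb] at hx
    refine ⟨i, ?_, ?_⟩ <;> cases b <;> simp [hx, signVal, (hw.weightAbove_pos hI).ne',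
      abs_of_pos (hw.weightAbove_pos hI)]

theorem sum_gt_eq_zero_or_weightAbove (I : Adm n) :
    ∑ K ∈ univ.filter (I < ·), w K / K.size = 0 ∨
      ∃ J, w J ≠ 0 ∧ I < J ∧ ∑ K ∈ univ.filter (I < ·), w K / K.size = weightAbove w J := by
  set L := univ.filter fun K => w K ≠ 0 ∧ I < K
  rcases L.eq_empty_or_nonempty with hL | hL
  · refine .inl (sum_eq_zero fun K hKI => ?_)
    by_cases hK : w K = 0
    · simp [hK]
    · exact absurd (mem_filter.2 ⟨mem_univ K, hK, (mem_filter.1 hKI).2⟩) (hL ▸ notMem_empty K)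
  · obtain ⟨J, hJ, hJ_min⟩ :=
      (hw.isChain (s := L) fun K hK => (mem_filter.1 hK).2.1).exists_forall_le hL
    obtain ⟨-, hJw, hIJ⟩ := mem_filter.1 hJ
    refine .inr ⟨J, hJw, hIJ, ?_⟩
    rw [weightAbove, sum_filter, sum_filter]
    refine sum_congr rfl fun K _ => ?_
    by_cases hK : w K = 0
    · simp [hK]
    · have : I < K ↔ J ≤ K := ⟨fun h => hJ_min K (mem_filter.2 ⟨mem_univ K, hK, h⟩), hIJ.trans_le⟩
      simp only [this]

theorem predBelow_absValues_crossMap {I : Adm n} (hI : w I ≠ 0) :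
    predBelow (absValues (crossMap w)) (weightAbove w I) = weightAbove w I - w I / I.size := by
  have hrest : weightAbove w I - w I / I.size = ∑ K ∈ univ.filter (I < ·), w K / K.size := by
    rw [weightAbove_eq_add w I, add_sub_cancel_left]
  rw [hw.absValues_crossMap, hrest]
  refine predBelow_eq (sum_nonneg fun K _ => div_nonneg (hw.nonneg K) K.size_pos.le) ?_ ?_
  · rcases hw.sum_gt_eq_zero_or_weightAbove I with h | ⟨J, hJ, hIJ, h⟩
    · exact .inl h
    · rw [h]
      exact .inr ⟨mem_image_of_mem _ (by simpa using hJ), hw.weightAbove_lt_of_lt hI hIJ⟩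
  · intro s hs hsI
    obtain ⟨J, hJ, rfl⟩ := mem_image.1 hs
    replace hJ : w J ≠ 0 := by simpa using hJ
    have hIJ : I ≤ J := (hw.comparable hI hJ).resolve_right fun hJI =>
      (hw.weightAbove_le_of_le hJI).not_gt hsI
    rw [← hrest]
    exact hw.weightAbove_le_of_lt (hIJ.lt_of_ne (by rintro rfl; exact hsI.false))

theorem barycentricOf_crossMap : barycentricOf (crossMap w) = w := by
  funext I
  have hinj : Set.InjOn (weightAbove w) (univ.filter (w · ≠ 0) : Finset (Adm n)) :=
    fun J hJ K hK h => Subtype.ext (by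
      rw [← hw.levelSet_crossMap_weightAbove (by simpa using hJ), h,
        hw.levelSet_crossMap_weightAbove (by simpa using hK)])
  rw [barycentricOf]
  nth_rw 1 [hw.absValues_crossMap]
  rw [sum_image hinj, sum_congr rfl fun J hJ => by
    rw [hw.levelSet_crossMap_weightAbove (mem_filter.1 hJ).2,
      hw.predBelow_absValues_crossMap (mem_filter.1 hJ).2, sub_sub_cancel]]
  simp_rw [show ∀ J : Adm n, I.1 = J.1 ↔ I = J from fun J => ⟨Subtype.ext, congrArg _⟩]
  rw [sum_ite_eq]
  by_cases hI : w I = 0 <;> simp [hI, I.size_pos.ne']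

end IsChainWeight

theorem mem_realization_chainComplex_iff {w : Adm n → ℝ} :
    w ∈ realization (chainComplex (n := n) fun _ => True) ↔ IsChainWeight w ∧ ∑ I, w I = 1 := by
  simp only [realization, chainComplex, Set.mem_ofPred_eq, implies_true, true_and]
  constructor
  · rintro ⟨h0, h1, hC⟩
    exact ⟨⟨h0, fun hI hJ => hC.total (by simpa using hI) (by simpa using hJ)⟩, h1⟩
  · rintro ⟨hw, h1⟩
    exact ⟨hw.nonneg, h1, hw.isChain fun I hI => by simpa using hI⟩

theorem IsChainWeight.sum_abs_crossMap {w : Adm n → ℝ} (hw : IsChainWeight w) :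
    ∑ i, |crossMap w i| = ∑ I, w I := by
  rw [← sum_barycentricOf, hw.barycentricOf_crossMap]

theorem mem_chainComplex_of_subset {P : Adm n → Prop} {σ τ : Finset (Adm n)}
    (hσ : σ ∈ chainComplex P) (hτ : τ ⊆ σ) : τ ∈ chainComplex P :=
  ⟨fun I hI => hσ.1 I (hτ hI), hσ.2.mono (coe_subset.2 hτ)⟩

theorem isCompact_realization {V : Type} [Fintype V] {K : Set (Finset V)}
    (hK : ∀ σ ∈ K, ∀ τ ⊆ σ, τ ∈ K) : IsCompact (realization K) := by
  have : realization K = ⋃ σ ∈ K, stdSimplex ℝ V ∩ ⋂ v ∈ (σ : Set V)ᶜ, {f | f v = 0} := by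
    ext f
    simp only [realization, stdSimplex, Set.mem_ofPred_eq, Set.mem_iUnion, Set.mem_inter_iff,
      Set.mem_iInter, Set.mem_compl_iff, mem_coe, exists_prop]
    constructor
    · rintro ⟨h0, h1, hf⟩
      exact ⟨_, hf, ⟨h0, h1⟩, fun v hv => by_contra fun h => hv (by simp [h])⟩
    · rintro ⟨σ, hσ, ⟨h0, h1⟩, hf⟩
      exact ⟨h0, h1, hK σ hσ _ fun v hv => by_contra fun h => (mem_filter.1 hv).2 (hf v h)⟩
  rw [this]
  exact (Set.toFinite K).isCompact_biUnion fun σ _ => (isCompact_stdSimplex ℝ V).inter_right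
    (isClosed_biInter fun v _ => isClosed_eq (continuous_apply v) continuous_const)

theorem continuous_crossMap : Continuous (crossMap (n := n)) :=
  continuous_finsetSum _ fun I _ => (continuous_apply I).smul continuous_const

noncomputable def realizationEquivL1Sphere :
    realization (chainComplex (n := n) fun _ => True) ≃ {x : Fin n → ℝ | ∑ i, |x i| = 1} where
  toFun w :=
    have hw := mem_realization_chainComplex_iff.1 w.2
    ⟨crossMap w, hw.1.sum_abs_crossMap.trans hw.2⟩
  invFun x := ⟨barycentricOf x, mem_realization_chainComplex_iff.2
    ⟨isChainWeight_barycentricOf x.1, (sum_barycentricOf x.1).trans x.2⟩⟩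
  left_inv w := Subtype.ext (mem_realization_chainComplex_iff.1 w.2).1.barycentricOf_crossMap
  right_inv x := Subtype.ext (crossMap_barycentricOf x.1)

noncomputable def realizationHomeomorphL1Sphere :
    realization (chainComplex (n := n) fun _ => True) ≃ₜ {x : Fin n → ℝ | ∑ i, |x i| = 1} :=
  haveI := isCompact_iff_compactSpace.1 <| isCompact_realization
    (K := chainComplex (n := n) fun _ => True) fun _ hσ _ hτ => mem_chainComplex_of_subset hσ hτ
  Continuous.homeoOfEquivCompactToT2 (f := realizationEquivL1Sphere) <|
    continuous_induced_rng.2 (continuous_crossMap.comp continuous_subtype_val)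

theorem sum_abs_smul {ι : Type*} [Fintype ι] (c : ℝ) (x : ι → ℝ) :
    ∑ i, |(c • x) i| = |c| * ∑ i, |x i| := by
  simp [abs_mul, mul_sum]

theorem toLp_ne_zero_of_sum_abs_eq_one {ι : Type*} [Fintype ι] {x : ι → ℝ}
    (hx : ∑ i, |x i| = 1) : WithLp.toLp 2 x ≠ 0 := by
  rw [ne_eq, WithLp.toLp_eq_zero]
  rintro rfl
  simp at hx

theorem sum_abs_pos {ι : Type*} [Fintype ι] {x : ι → ℝ} (hx : x ≠ 0) : 0 < ∑ i, |x i| := by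
  obtain ⟨i, hi⟩ := Function.ne_iff.1 hx
  exact sum_pos' (fun i _ => abs_nonneg _) ⟨i, mem_univ i, abs_pos.2 hi⟩

theorem ofLp_ne_zero_of_mem_sphere {ι : Type*} [Fintype ι]
    (y : Metric.sphere (0 : EuclideanSpace ℝ ι) 1) : y.1.ofLp ≠ 0 :=
  fun h => ne_zero_of_mem_unit_sphere y (PiLp.ext (congrFun h))

noncomputable def l1SphereHomeomorph (ι : Type*) [Fintype ι] :
    {x : ι → ℝ | ∑ i, |x i| = 1} ≃ₜ Metric.sphere (0 : EuclideanSpace ℝ ι) 1 where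
  toFun x := ⟨‖WithLp.toLp 2 x.1‖⁻¹ • WithLp.toLp 2 x.1, by
    rw [mem_sphere_zero_iff_norm, norm_smul, norm_inv, norm_norm,
      inv_mul_cancel₀ (norm_ne_zero_iff.2 (toLp_ne_zero_of_sum_abs_eq_one x.2))]⟩
  invFun y := ⟨(∑ i, |y.1 i|)⁻¹ • y.1.ofLp, by
    have hy := sum_abs_pos (ofLp_ne_zero_of_mem_sphere y)
    show ∑ i, |((∑ i, |y.1 i|)⁻¹ • y.1.ofLp) i| = 1
    rw [sum_abs_smul, abs_of_pos (inv_pos.2 hy), inv_mul_cancel₀ hy.ne']⟩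
  left_inv x := by
    have hc : 0 < ‖WithLp.toLp 2 x.1‖⁻¹ :=
      inv_pos.2 (norm_pos_iff.2 (toLp_ne_zero_of_sum_abs_eq_one x.2))
    refine Subtype.ext ?_
    show (∑ i, |(‖WithLp.toLp 2 x.1‖⁻¹ • WithLp.toLp 2 x.1).ofLp i|)⁻¹ •
      (‖WithLp.toLp 2 x.1‖⁻¹ • WithLp.toLp 2 x.1).ofLp = x.1
    rw [WithLp.ofLp_smul, WithLp.ofLp_toLp, sum_abs_smul, x.2, mul_one, abs_of_pos hc, smul_smul,
      inv_mul_cancel₀ hc.ne', one_smul]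
  right_inv y := by
    have hy := sum_abs_pos (ofLp_ne_zero_of_mem_sphere y)
    refine Subtype.ext ?_
    show ‖WithLp.toLp 2 ((∑ i, |y.1 i|)⁻¹ • y.1.ofLp)‖⁻¹ •
      WithLp.toLp 2 ((∑ i, |y.1 i|)⁻¹ • y.1.ofLp) = y.1
    rw [WithLp.toLp_smul, WithLp.toLp_ofLp, norm_smul, mem_sphere_zero_iff_norm.1 y.2, mul_one,
      norm_inv, Real.norm_of_nonneg hy.le, inv_inv, smul_smul, mul_inv_cancel₀ hy.ne', one_smul]
  continuous_toFun := by
    have hu : Continuous fun x : {x : ι → ℝ | ∑ i, |x i| = 1} => WithLp.toLp 2 x.1 :=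
      (PiLp.continuous_toLp 2 _).comp continuous_subtype_val
    exact ((hu.norm.inv₀ fun x => norm_ne_zero_iff.2 (toLp_ne_zero_of_sum_abs_eq_one x.2)).smul
      hu).subtype_mk _
  continuous_invFun := by
    have hv : Continuous fun y : Metric.sphere (0 : EuclideanSpace ℝ ι) 1 => y.1.ofLp :=
      (PiLp.continuous_ofLp 2 _).comp continuous_subtype_val
    exact (((continuous_finsetSum _ fun i _ => ((continuous_apply i).comp hv).abs).inv₀
      fun y => (sum_abs_pos (ofLp_ne_zero_of_mem_sphere y)).ne').smul hv).subtype_mk _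

theorem KBn_simplicial_sphere_general (n : ℕ) :
    (∀ σ : Finset (Adm n), IsChain (· ≤ ·) (σ : Set (Adm n)) →
      (∀ τ : Finset (Adm n), IsChain (· ≤ ·) (τ : Set (Adm n)) → σ ⊆ τ → σ = τ) →
      σ.card = n) ∧
    Nonempty (↥(realization (chainComplex (n := n) fun _ => True)) ≃ₜ
      ↥(Metric.sphere (0 : EuclideanSpace ℝ (Fin n)) 1)) :=
  ⟨fun _ hσ hmax => Adm.card_eq_of_maximal hσ hmax,
    ⟨realizationHomeomorphL1Sphere.trans (l1SphereHomeomorph (Fin n))⟩⟩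

/-- `K_{B_n}`, the order complex of the admissible subsets of `[±n]` ordered by
inclusion, is a simplicial sphere of dimension `n - 1`: every maximal face
(maximal chain) has exactly `n` elements, and the geometric realization is
homeomorphic to the sphere `S^{n-1}`. -/
theorem KBn_simplicial_sphere (n : ℕ) (hn : 1 ≤ n) :
    (∀ σ : Finset (Adm n), IsChain (· ≤ ·) (σ : Set (Adm n)) →
      (∀ τ : Finset (Adm n), IsChain (· ≤ ·) (τ : Set (Adm n)) → σ ⊆ τ → σ = τ) →
      σ.card = n) ∧
    Nonempty (↥(realization (chainComplex (n := n) fun _ => True)) ≃ₜ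
      ↥(Metric.sphere (0 : EuclideanSpace ℝ (Fin n)) 1)) :=
  KBn_simplicial_sphere_general n
end

section
/- If a pure simplicial complex K has a shelling F_1, ..., F_t, and K' is the complex whose facets are the sets F'_m obtained by deleting from each F_m all vertices in a fixed set E (assuming each F'_m is nonempty and all F'_m have equal cardinality), then the ordering of the distinct sets F'_m by first appearance is a shelling of K'. In particular, K_{B_n}^{odd} is shellable. -/
open scoped Classical

/-- The Björner–Wachs shelling criterion for an ordering of facets:
for all `i < k` there is `j < k` with `F i ∩ F k ⊆ F j ∩ F k` and
`|F j ∩ F k| = |F k| - 1`. -/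
def IsShellingOrder {V : Type*} [DecidableEq V] {t : ℕ} (F : Fin t → Finset V) : Prop :=
  ∀ i k : Fin t, i < k → ∃ j, j < k ∧
    F i ∩ F k ⊆ F j ∩ F k ∧ (F j ∩ F k).card = (F k).card - 1

/-!
Deleting `E` from a shelling: if `F'_i, F'_k` first occur at `a < b`, the shelling of `K` gives
`j < b` with `F_a ∩ F_b ⊆ F_j ∩ F_b`, a facet of `F_b`. Removing `E` preserves the inclusion, and
`(F_j ∩ F_b) \ E` is still a facet of `F'_b` unless it equals `F'_b`; but then `F'_b ⊆ F'_j`, so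
`F'_b = F'_j` would already have occurred at or before `j < b`.

The maximal chains of admissible sets are the chains of initial segments of the words of signed
permutations, and ordering signed permutations lexicographically by their letters shells
`K_{B_n}`: for `w < w'`, let `p` be their first difference and follow the increasing run of `w'`
from `p`. If the run ends in a descent, swapping it gives a smaller word whose chain differs from
that of `w'` only at the end of the run; if the run reaches the last letter, that letter is
positive and negating it does the same. In both cases `w` cannot share that chain element with
`w'`: the letter `w p` would then occur in the run, where all letters are at least `w' p > w p`.
Every odd chain injects, by cardinality, into each `chain w \ evens`, so these are the facets of
`K_{B_n}^{odd}`, and the first part applies.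
-/

open Finset

theorem MonotoneOn.Icc_of_covBy {α β : Type*} [LinearOrder α] [Preorder β] {f : α → β}
    {a b c : α} (h : MonotoneOn f (Set.Icc a b)) (hab : a ≤ b) (hbc : b ⋖ c) (hf : f b ≤ f c) :
    MonotoneOn f (Set.Icc a c) := by
  have hsplit : ∀ x ∈ Set.Icc a c, x ∈ Set.Icc a b ∨ x = c := fun x hx =>
    (le_or_gt x b).imp (⟨hx.1, ·⟩) fun hbx => hx.2.antisymm (not_lt.1 (hbc.2 hbx))
  intro x hx y hy hxy
  rcases hsplit x hx with hxb | rfl <;> rcases hsplit y hy with hyb | rfl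
  · exact h hxb hyb hxy
  · exact (h hxb ⟨hab, le_rfl⟩ hxb.2).trans hf
  · exact (hbc.lt.not_ge (hxy.trans hyb.2)).elim
  · exact le_rfl

theorem Fin.lt_card_filter_lt_iff {n : ℕ} {α : Type*} [LinearOrder α] {g : Fin n → α}
    (hg : Monotone g) (c : α) (m : Fin n) :
    (m : ℕ) < #(univ.filter fun m => g m < c) ↔ g m < c := by
  constructor
  · intro hm
    by_contra hgm
    have hsub : (univ.filter fun m => g m < c) ⊆ Iio m := fun m' hm' => by
      simp only [mem_filter, mem_univ, true_and] at hm'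
      exact mem_Iio.2 (lt_of_not_ge fun h => hgm ((hg h).trans_lt hm'))
    exact (card_le_card hsub).trans_eq (Fin.card_Iio m) |>.not_gt hm
  · intro hgm
    have hsub : Iic m ⊆ univ.filter fun m => g m < c := fun m' hm' => by
      simpa using (hg (mem_Iic.1 hm')).trans_lt hgm
    exact (Fin.card_Iic m).symm.trans_le (card_le_card hsub) |> Nat.lt_of_succ_le

theorem Fin.exists_strictMono_firstOccurrences {α : Type*} {t : ℕ} (f : Fin t → α) :
    ∃ (s : ℕ) (d : Fin s → Fin t), StrictMono d ∧ (∀ m j, f j = f (d m) → d m ≤ j) ∧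
      ∀ j, ∃ m, f (d m) = f j := by
  set S := univ.filter fun j => ∀ l < j, f l ≠ f j
  have hfirst : ∀ j, ∃ j' ∈ S, f j' = f j ∧ j' ≤ j := fun j => by
    obtain ⟨j', hj', hmin⟩ := exists_min_image (univ.filter fun l => f l = f j) id ⟨j, by simp⟩
    simp only [mem_filter, mem_univ, true_and, id] at hj' hmin
    exact ⟨j', by simpa [S] using fun l hl hfl => (hmin l (hfl.trans hj')).not_gt hl,
      hj', hmin j rfl⟩
  have huniq : ∀ a ∈ S, ∀ b ∈ S, f a = f b → a = b := fun a ha b hb hab => by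
    simp only [S, mem_filter, mem_univ, true_and] at ha hb
    rcases lt_trichotomy a b with h | h | h
    exacts [absurd hab (hb a h), h, absurd hab.symm (ha b h)]
  refine ⟨#S, S.orderEmbOfFin rfl, (S.orderEmbOfFin rfl).strictMono, fun m j hj => ?_, fun j => ?_⟩
  · obtain ⟨j', hj'S, hfj', hj'j⟩ := hfirst j
    rwa [huniq _ (orderEmbOfFin_mem S rfl m) j' hj'S (hj.symm.trans hfj'.symm)]
  · obtain ⟨j', hj'S, hfj', -⟩ := hfirst j
    rw [← mem_coe, ← range_orderEmbOfFin S rfl] at hj'S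
    obtain ⟨m, rfl⟩ := hj'S
    exact ⟨m, hfj'⟩

section Deletion

variable {V : Type*} [DecidableEq V]

theorem Finset.card_sdiff_eq_card_sub_one_of_ne {A B E : Finset V} (hAB : A ⊆ B)
    (hcard : #A = #B - 1) (hne : A \ E ≠ B \ E) : #(A \ E) = #(B \ E) - 1 := by
  have hsub : A \ E ⊆ B \ E := sdiff_subset_sdiff hAB le_rfl
  have hlt : #(A \ E) < #(B \ E) := card_lt_card (ssubset_of_subset_of_ne hsub hne)
  have hdiff : #(B \ E) - #(A \ E) ≤ #B - #A := by
    rw [← card_sdiff_of_subset hsub, ← card_sdiff_of_subset hAB]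
    exact card_le_card fun x hx => by simp only [mem_sdiff] at hx ⊢; tauto
  omega

theorem IsShellingOrder.sdiff_firstOccurrences {t s : ℕ} {F : Fin t → Finset V}
    (hF : IsShellingOrder F) {E : Finset V}
    (hfacet : ∀ m l, F m \ E ⊆ F l \ E → F m \ E = F l \ E)
    {G : Fin s → Finset V} {d : Fin s → Fin t} (hd : StrictMono d)
    (hG : ∀ m, G m = F (d m) \ E) (hleast : ∀ m j, F j \ E = G m → d m ≤ j)
    (hrange : Set.range (fun j => F j \ E) ⊆ Set.range G) :
    IsShellingOrder G := by
  intro i k hik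
  obtain ⟨j, hjk, hsub, hcard⟩ := hF (d i) (d k) (hd hik)
  obtain ⟨m, hm⟩ := hrange ⟨j, rfl⟩
  have hinter : ∀ A B : Finset V, (A \ E) ∩ (B \ E) = (A ∩ B) \ E := fun A B => by
    ext; simp only [mem_inter, mem_sdiff]; tauto
  refine ⟨m, hd.lt_iff_lt.1 ((hleast m j hm.symm).trans_lt hjk), ?_, ?_⟩
  · rw [hm, hG i, hG k, hinter, hinter]
    exact sdiff_subset_sdiff hsub le_rfl
  · rw [hm, hG k, hinter]
    refine card_sdiff_eq_card_sub_one_of_ne inter_subset_right hcard fun heq => ?_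
    have hfj : F (d k) \ E = F j \ E :=
      hfacet _ _ (heq ▸ sdiff_subset_sdiff inter_subset_left le_rfl)
    exact (hleast k j (hfj ▸ (hG k).symm)).not_gt hjk

end Deletion

namespace Adm

variable {n : ℕ}

theorem mem_supp {x : Adm n} {i : Fin n} : i ∈ x.supp ↔ x.1 i ≠ none := by
  simp [supp]

theorem size_eq_card_supp (x : Adm n) : x.size = #x.supp := rfl

theorem one_le_size_s9 (x : Adm n) : 1 ≤ x.size := by
  obtain ⟨i, hi⟩ := Function.ne_iff.1 x.2
  exact card_pos.2 ⟨i, mem_supp.2 hi⟩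

theorem size_le_s9 (x : Adm n) : x.size ≤ n :=
  (card_le_univ _).trans_eq (Fintype.card_fin n)

theorem supp_subset_supp {x y : Adm n} (hxy : x ≤ y) : x.supp ⊆ y.supp := fun i hi => by
  obtain ⟨b, hb⟩ := Option.ne_none_iff_exists'.1 (mem_supp.1 hi)
  exact mem_supp.2 (by rw [hxy i b hb]; simp)

theorem eq_of_le_of_size_le_s9 {x y : Adm n} (hxy : x ≤ y) (hs : y.size ≤ x.size) : x = y := by
  have hsupp := eq_of_subset_of_card_le (supp_subset_supp hxy) hs
  refine Subtype.ext (funext fun i => ?_)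
  rcases hx : x.1 i with _ | b
  · by_contra hy
    exact mem_supp.1 (hsupp ▸ mem_supp.2 (Ne.symm hy)) hx
  · exact (hxy i b hx).symm

theorem injOn_size {σ : Set (Adm n)} (hσ : IsChain (· ≤ ·) σ) : Set.InjOn size σ :=
  fun _ hx _ hy hxy => (hσ.total hx hy).elim (eq_of_le_of_size_le_s9 · hxy.ge)
    fun h => (eq_of_le_of_size_le_s9 h hxy.le).symm

theorem mem_supp_iff_card_lt {σ : Finset (Adm n)} (hσ : IsChain (· ≤ ·) (σ : Set (Adm n)))
    {x : Adm n} (hx : x ∈ σ) (i : Fin n) :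
    i ∈ x.supp ↔ #(σ.filter fun y => i ∉ y.supp) < #(σ.filter (· ≤ x)) := by
  constructor
  · intro hi
    refine card_lt_card ((ssubset_iff_of_subset fun y hy => ?_).2 ⟨x, by simp [hx], by simp [hi]⟩)
    obtain ⟨hyσ, hyi⟩ := mem_filter.1 hy
    refine mem_filter.2 ⟨hyσ, (hσ.total hyσ hx).resolve_right fun hxy => ?_⟩
    exact hyi (supp_subset_supp hxy hi)
  · intro hlt
    by_contra hi
    refine hlt.not_ge (card_le_card fun y hy => ?_)
    obtain ⟨hyσ, hyx⟩ := mem_filter.1 hy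
    exact mem_filter.2 ⟨hyσ, fun h => hi (supp_subset_supp hyx h)⟩

theorem exists_sign_of_isChain {σ : Set (Adm n)} (hσ : IsChain (· ≤ ·) σ) :
    ∃ ε : Fin n → Bool, ∀ x ∈ σ, ∀ i b, x.1 i = some b → ε i = b := by
  refine ⟨fun i => decide (∃ y ∈ σ, y.1 i = some true), fun x hx i b hxi => ?_⟩
  cases b
  · refine decide_eq_false fun ⟨y, hy, hyi⟩ => ?_
    rcases hσ.total hx hy with h | h
    · simp [h i false hxi] at hyi
    · simp [h i true hyi] at hxi
  · exact decide_eq_true ⟨x, hx, hxi⟩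

noncomputable def evens (n : ℕ) : Finset (Adm n) :=
  univ.filter fun x => Even x.size

theorem mem_sdiff_evens {s : Finset (Adm n)} {x : Adm n} :
    x ∈ s \ evens n ↔ x ∈ s ∧ Odd x.size := by
  simp [evens]

noncomputable def sizePred (x : Adm n) : Fin n :=
  ⟨x.size - 1, by have := x.one_le_size_s9; have := x.size_le_s9; omega⟩

theorem sizePred_add_one (x : Adm n) : (x.sizePred : ℕ) + 1 = x.size := by
  have := x.one_le_size_s9
  simp only [sizePred]
  omega

end Adm

theorem maximal_mem_chainComplex_iff {n : ℕ} {P : Adm n → Prop} {σ : Finset (Adm n)} :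
    Maximal (· ∈ chainComplex P) σ ↔
      (∀ I ∈ σ, P I) ∧ IsChain (· ≤ ·) (σ : Set (Adm n)) ∧
        ∀ τ : Finset (Adm n), (∀ I ∈ τ, P I) → IsChain (· ≤ ·) (τ : Set (Adm n)) →
          σ ⊆ τ → σ = τ := by
  simp only [maximal_iff, chainComplex, Set.mem_ofPred_eq, and_imp, and_assoc]

/-- A signed permutation, read as the word whose `j`-th letter is `perm j` with sign `sign (perm j)`
(`true` is positive, as in `Adm`); its maximal chain consists of the initial segments of the word. -/
@[ext]
structure SignedPerm (n : ℕ) where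
  perm : Equiv.Perm (Fin n)
  sign : Fin n → Bool

namespace SignedPerm

variable {n : ℕ}

instance : Fintype (SignedPerm n) :=
  Fintype.ofEquiv (Equiv.Perm (Fin n) × (Fin n → Bool))
    ⟨fun p => ⟨p.1, p.2⟩, fun w => (w.perm, w.sign), fun _ => rfl, fun _ => rfl⟩

/-- Letters are compared by sign first, negative below positive: this makes negating the last letter
of a word decrease it, which the shelling needs when the word ends in an increasing run. -/
def letter (w : SignedPerm n) (j : Fin n) : Bool ×ₗ Fin n :=
  toLex (w.sign (w.perm j), w.perm j)

theorem perm_eq_of_letter_eq {w w' : SignedPerm n} {j j' : Fin n}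
    (h : w.letter j = w'.letter j') : w.perm j = w'.perm j' :=
  congrArg (fun l => (ofLex l).2) h

theorem letter_injective : Function.Injective (letter (n := n)) := fun w w' h => by
  have hperm : w.perm = w'.perm := Equiv.ext fun j => perm_eq_of_letter_eq (congrFun h j)
  refine SignedPerm.ext hperm (funext fun i => ?_)
  have := congrArg (fun l => (ofLex l).1) (congrFun h (w.perm.symm i))
  simpa [letter, hperm] using this

noncomputable instance : LinearOrder (SignedPerm n) :=
  LinearOrder.lift' (fun w => toLex w.letter) letter_injective

theorem lt_iff {w w' : SignedPerm n} :
    w < w' ↔ ∃ p, (∀ q < p, w.letter q = w'.letter q) ∧ w.letter p < w'.letter p := Iff.rfl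

def initSeg (w : SignedPerm n) (j : Fin n) : Adm n :=
  ⟨fun i => if w.perm.symm i ≤ j then some (w.sign i) else none,
    fun h => by simpa using congrFun h (w.perm j)⟩

theorem initSeg_apply (w : SignedPerm n) (j i : Fin n) :
    (w.initSeg j).1 i = if w.perm.symm i ≤ j then some (w.sign i) else none := rfl

theorem size_initSeg (w : SignedPerm n) (j : Fin n) : (w.initSeg j).size = j + 1 := by
  have : (w.initSeg j).supp = (Iic j).map w.perm.toEmbedding := by
    ext i
    simp [Adm.mem_supp, initSeg_apply, mem_map_equiv]
  rw [Adm.size_eq_card_supp, this, card_map, Fin.card_Iic]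

theorem initSeg_mono (w : SignedPerm n) : Monotone w.initSeg := fun j j' h i b hb => by
  rw [initSeg_apply] at hb ⊢
  split_ifs at hb with hi
  · rwa [if_pos (hi.trans h)]

theorem eq_of_initSeg_eq {w w' : SignedPerm n} {j j' : Fin n} (h : w.initSeg j = w'.initSeg j') :
    j = j' :=
  Fin.ext (by simpa [size_initSeg] using congrArg Adm.size h)

noncomputable def chain (w : SignedPerm n) : Finset (Adm n) :=
  univ.image w.initSeg

theorem mem_chain {w : SignedPerm n} {x : Adm n} : x ∈ w.chain ↔ ∃ j, w.initSeg j = x := by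
  simp [chain]

theorem isChain_chain (w : SignedPerm n) : IsChain (· ≤ ·) (w.chain : Set (Adm n)) := by
  rintro _ hx _ hy -
  obtain ⟨j, rfl⟩ := mem_chain.1 hx
  obtain ⟨j', rfl⟩ := mem_chain.1 hy
  exact (le_total j j').imp (w.initSeg_mono ·) (w.initSeg_mono ·)

theorem mem_chain_inter_chain {w w' : SignedPerm n} {x : Adm n} :
    x ∈ w.chain ∩ w'.chain ↔ ∃ j, w.initSeg j = w'.initSeg j ∧ w'.initSeg j = x := by
  simp only [mem_inter, mem_chain]
  constructor
  · rintro ⟨⟨j, rfl⟩, j', hj'⟩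
    obtain rfl := eq_of_initSeg_eq hj'
    exact ⟨_, hj'.symm, hj'⟩
  · rintro ⟨j, hj, rfl⟩
    exact ⟨⟨j, hj⟩, j, rfl⟩

def swapPos (w : SignedPerm n) (a c : Fin n) : SignedPerm n :=
  ⟨(Equiv.swap a c).trans w.perm, w.sign⟩

theorem letter_swapPos (w : SignedPerm n) (a c q : Fin n) :
    (w.swapPos a c).letter q = w.letter (Equiv.swap a c q) := rfl

theorem initSeg_swapPos_apply (w : SignedPerm n) (a c j i : Fin n) :
    ((w.swapPos a c).initSeg j).1 i =
      if Equiv.swap a c (w.perm.symm i) ≤ j then some (w.sign i) else none := rfl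

theorem initSeg_swapPos_of_ne (w : SignedPerm n) {a c j : Fin n} (hac : (c : ℕ) = a + 1)
    (hj : j ≠ a) : (w.swapPos a c).initSeg j = w.initSeg j := by
  have hj' : (j : ℕ) ≠ a := Fin.val_ne_of_ne hj
  refine Subtype.ext (funext fun i => ?_)
  rw [initSeg_swapPos_apply, initSeg_apply]
  congr 1
  apply propext
  rcases eq_or_ne (w.perm.symm i) a with h | h
  · rw [h, Equiv.swap_apply_left, Fin.le_def, Fin.le_def]; omega
  rcases eq_or_ne (w.perm.symm i) c with h' | h'
  · rw [h', Equiv.swap_apply_right, Fin.le_def, Fin.le_def]; omega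
  · rw [Equiv.swap_apply_of_ne_of_ne h h']

theorem initSeg_swapPos_self_ne (w : SignedPerm n) {a c : Fin n} (hac : a < c) :
    (w.swapPos a c).initSeg a ≠ w.initSeg a := fun h => by
  have := congrFun (congrArg Subtype.val h) (w.perm c)
  rw [initSeg_swapPos_apply, initSeg_apply] at this
  simp [hac.not_ge] at this

theorem swapPos_lt (w : SignedPerm n) {a c : Fin n} (hac : a < c)
    (hdesc : w.letter c < w.letter a) : w.swapPos a c < w :=
  lt_iff.2 ⟨a, fun q hq => by
    rw [letter_swapPos, Equiv.swap_apply_of_ne_of_ne hq.ne (hq.trans hac).ne], by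
    rwa [letter_swapPos, Equiv.swap_apply_left]⟩

def negateAt (w : SignedPerm n) (b : Fin n) : SignedPerm n :=
  ⟨w.perm, Function.update w.sign (w.perm b) false⟩

theorem letter_negateAt_of_ne (w : SignedPerm n) {b q : Fin n} (hq : q ≠ b) :
    (w.negateAt b).letter q = w.letter q := by
  simp [negateAt, letter, Function.update_of_ne (w.perm.injective.ne hq)]

theorem negateAt_lt (w : SignedPerm n) {b : Fin n} (hb : w.sign (w.perm b) = true) :
    w.negateAt b < w :=
  lt_iff.2 ⟨b, fun q hq => w.letter_negateAt_of_ne hq.ne, by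
    simp [negateAt, letter, hb, Prod.Lex.toLex_lt_toLex]⟩

theorem initSeg_negateAt_of_ne (w : SignedPerm n) {b j : Fin n} (htop : ∀ q, q ≤ b)
    (hj : j ≠ b) : (w.negateAt b).initSeg j = w.initSeg j := by
  refine Subtype.ext (funext fun i => ?_)
  simp only [negateAt, initSeg_apply]
  rcases eq_or_ne i (w.perm b) with rfl | hi
  · simp [(lt_of_le_of_ne (htop j) hj).not_ge]
  · rw [Function.update_of_ne hi]

theorem initSeg_negateAt_self_ne (w : SignedPerm n) {b : Fin n} (hb : w.sign (w.perm b) = true) :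
    (w.negateAt b).initSeg b ≠ w.initSeg b := fun h => by
  have := congrFun (congrArg Subtype.val h) (w.perm b)
  simp [negateAt, initSeg_apply, hb] at this

theorem le_of_perm_apply_eq {w w' : SignedPerm n} {p q : Fin n}
    (hlow : ∀ q < p, w.letter q = w'.letter q) (hq : w'.perm q = w.perm p) : p ≤ q := by
  by_contra! hqp
  exact hqp.ne (w.perm.injective ((perm_eq_of_letter_eq (hlow q hqp)).trans hq))

theorem initSeg_ne_of_monotoneOn {w w' : SignedPerm n} {p b : Fin n}
    (hlow : ∀ q < p, w.letter q = w'.letter q) (hlt : w.letter p < w'.letter p) (hpb : p ≤ b)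
    (hmono : MonotoneOn w'.letter (Set.Icc p b)) : w.initSeg b ≠ w'.initSeg b := fun h => by
  set q := w'.perm.symm (w.perm p)
  have hq : w'.perm q = w.perm p := w'.perm.apply_symm_apply _
  have hpq := le_of_perm_apply_eq hlow hq
  have hval := congrFun (congrArg Subtype.val h) (w.perm p)
  rw [initSeg_apply, initSeg_apply, Equiv.symm_apply_apply, if_pos hpb] at hval
  split_ifs at hval with hqb
  have hletter : w'.letter q = w.letter p := by
    simp only [letter, hq, Option.some.inj hval]
  exact (hlt.trans_le (hmono ⟨le_rfl, hpb⟩ ⟨hpq, hqb⟩ hpq)).ne' hletter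

theorem sign_eq_true_of_monotoneOn {w w' : SignedPerm n} {p b : Fin n}
    (hlow : ∀ q < p, w.letter q = w'.letter q) (hlt : w.letter p < w'.letter p)
    (htop : ∀ q, q ≤ b) (hmono : MonotoneOn w'.letter (Set.Icc p b)) :
    w'.sign (w'.perm b) = true := by
  by_contra hb
  rw [Bool.not_eq_true] at hb
  set q := w'.perm.symm (w.perm p)
  have hq : w'.perm q = w.perm p := w'.perm.apply_symm_apply _
  have hpq := le_of_perm_apply_eq hlow hq
  have hqb : w'.letter q ≤ w'.letter b := hmono ⟨hpq, htop q⟩ ⟨htop p, le_rfl⟩ (htop q)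
  have hsign : w'.sign (w.perm p) = false := by
    simp only [letter, hq, hb, Prod.Lex.toLex_le_toLex] at hqb
    exact hqb.elim (absurd · not_lt_bot) And.left
  have hqp : w'.letter q ≤ w.letter p := by
    cases h : w.sign (w.perm p) <;> simp [letter, hq, hsign, h, Prod.Lex.toLex_le_toLex]
  exact (hmono ⟨le_rfl, htop p⟩ ⟨hpq, htop q⟩ hpq).not_gt (hqp.trans_lt hlt)

theorem exists_adjacent_lt {w w' : SignedPerm n} (h : w < w') :
    ∃ w'' < w', ∃ j, (∀ j' ≠ j, w''.initSeg j' = w'.initSeg j') ∧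
      w''.initSeg j ≠ w'.initSeg j ∧ w.initSeg j ≠ w'.initSeg j := by
  obtain ⟨p, hlow, hlt⟩ := lt_iff.1 h
  -- `b` ends the longest increasing run of letters of `w'` starting at `p`
  set S := univ.filter fun b => p ≤ b ∧ MonotoneOn w'.letter (Set.Icc p b)
  have hpS : p ∈ S := by simp [S]
  set b := S.max' ⟨p, hpS⟩
  obtain ⟨hpb, hmono⟩ : p ≤ b ∧ MonotoneOn w'.letter (Set.Icc p b) :=
    (mem_filter.1 (S.max'_mem _)).2
  have hne := initSeg_ne_of_monotoneOn hlow hlt hpb hmono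
  by_cases htop : ∀ q, q ≤ b
  · have hsign := sign_eq_true_of_monotoneOn hlow hlt htop hmono
    exact ⟨_, w'.negateAt_lt hsign, b, fun j hj => w'.initSeg_negateAt_of_ne htop hj,
      w'.initSeg_negateAt_self_ne hsign, hne⟩
  obtain ⟨q, hbq⟩ := not_forall.1 htop
  set c : Fin n := ⟨b + 1, by have := q.2; rw [not_le, Fin.lt_def] at hbq; omega⟩
  have hbc : b ⋖ c := ⟨Fin.lt_def.2 (by simp [c]), fun x h₁ h₂ => by
    rw [Fin.lt_def] at h₁ h₂
    simp only [c] at h₂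
    omega⟩
  have hdesc : w'.letter c < w'.letter b := by
    by_contra! hle
    have hcS : c ∈ S := by
      simpa [S] using ⟨hpb.trans hbc.le, hmono.Icc_of_covBy hpb hbc hle⟩
    exact (S.le_max' c hcS).not_gt hbc.lt
  exact ⟨_, w'.swapPos_lt hbc.lt hdesc, b, fun j hj => w'.initSeg_swapPos_of_ne rfl hj,
    w'.initSeg_swapPos_self_ne hbc.lt, hne⟩

theorem chain_inter_subset {w w' w'' : SignedPerm n} {j : Fin n}
    (hfix : ∀ j' ≠ j, w''.initSeg j' = w'.initSeg j') (hj : w.initSeg j ≠ w'.initSeg j) :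
    w.chain ∩ w'.chain ⊆ w''.chain ∩ w'.chain := fun x hx => by
  obtain ⟨j', hj', rfl⟩ := mem_chain_inter_chain.1 hx
  have hne : j' ≠ j := by rintro rfl; exact hj hj'
  exact mem_chain_inter_chain.2 ⟨j', hfix j' hne, rfl⟩

theorem chain_inter_eq_erase {w' w'' : SignedPerm n} {j : Fin n}
    (hfix : ∀ j' ≠ j, w''.initSeg j' = w'.initSeg j') (hj : w''.initSeg j ≠ w'.initSeg j) :
    w''.chain ∩ w'.chain = w'.chain.erase (w'.initSeg j) := by
  ext x
  rw [mem_chain_inter_chain, mem_erase, mem_chain]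
  constructor
  · rintro ⟨j', hj', rfl⟩
    refine ⟨fun h => ?_, j', rfl⟩
    obtain rfl := eq_of_initSeg_eq h
    exact hj hj'
  · rintro ⟨hx, j', rfl⟩
    have hne : j' ≠ j := by rintro rfl; exact hx rfl
    exact ⟨j', hfix j' hne, rfl⟩

theorem isShellingOrder_chain {t : ℕ} (e : Fin t ≃o SignedPerm n) :
    IsShellingOrder fun m => (e m).chain := by
  intro i k hik
  obtain ⟨w'', hlt, j, hfix, hj'', hj⟩ := exists_adjacent_lt (e.strictMono hik)
  refine ⟨e.symm w'', by rwa [← e.lt_iff_lt, e.apply_symm_apply], ?_, ?_⟩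
  · simp only [e.apply_symm_apply]
    exact chain_inter_subset hfix hj
  · simp only [e.apply_symm_apply]
    rw [chain_inter_eq_erase hfix hj'', card_erase_of_mem (mem_chain.2 ⟨j, rfl⟩)]

theorem exists_subset_chain {σ : Finset (Adm n)} (hσ : IsChain (· ≤ ·) (σ : Set (Adm n))) :
    ∃ w : SignedPerm n, σ ⊆ w.chain := by
  obtain ⟨ε, hε⟩ := Adm.exists_sign_of_isChain hσ
  -- sort the coordinates by the first member of `σ` in whose support they lie
  set rank : Fin n → ℕ := fun i => #(σ.filter fun y => i ∉ y.supp)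
  set π := Tuple.sort rank
  refine ⟨⟨π, ε⟩, fun x hx => mem_chain.2 ⟨x.sizePred, ?_⟩⟩
  set c := #(σ.filter (· ≤ x))
  have hmap : (univ.filter fun m => rank (π m) < c).map π.toEmbedding = x.supp := by
    ext i
    simp [mem_map_equiv, Adm.mem_supp_iff_card_lt hσ hx, rank, c]
  have hmono : Monotone fun m => rank (π m) := Tuple.monotone_sort rank
  have hsize : x.size = #(univ.filter fun m => rank (π m) < c) := by
    rw [Adm.size_eq_card_supp, ← hmap, card_map]
  have hpos : ∀ i, (π.symm i : ℕ) < x.size ↔ i ∈ x.supp := fun i => by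
    rw [hsize, Fin.lt_card_filter_lt_iff hmono, Equiv.apply_symm_apply,
      Adm.mem_supp_iff_card_lt hσ hx]
  refine Subtype.ext (funext fun i => ?_)
  have hle : π.symm i ≤ x.sizePred ↔ i ∈ x.supp := by
    rw [Fin.le_def, ← hpos, ← x.sizePred_add_one]
    omega
  rw [initSeg_apply]
  by_cases hi : i ∈ x.supp
  · obtain ⟨b, hb⟩ := Option.ne_none_iff_exists'.1 (Adm.mem_supp.1 hi)
    rw [if_pos (hle.2 hi), hb]
    exact congrArg some (hε x hx i b hb)
  · rw [if_neg (mt hle.1 hi), of_not_not (mt Adm.mem_supp.2 hi)]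

theorem chain_sdiff_evens_mem_chainComplex (w : SignedPerm n) :
    w.chain \ Adm.evens n ∈ chainComplex fun I : Adm n => Odd I.size :=
  ⟨fun _ hI => (Adm.mem_sdiff_evens.1 hI).2,
    w.isChain_chain.mono (coe_subset.2 sdiff_subset)⟩

theorem card_le_card_chain_sdiff_evens (w : SignedPerm n) {τ : Finset (Adm n)}
    (hτ : τ ∈ chainComplex fun I : Adm n => Odd I.size) : #τ ≤ #(w.chain \ Adm.evens n) := by
  refine card_le_card_of_injOn (fun x => w.initSeg x.sizePred) (fun x hx => ?_) ?_
  · rw [mem_coe, Adm.mem_sdiff_evens, size_initSeg, Adm.sizePred_add_one]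
    exact ⟨mem_chain.2 ⟨_, rfl⟩, hτ.1 x hx⟩
  · intro x hx y hy hxy
    refine Adm.injOn_size hτ.2 hx hy ?_
    rw [← x.sizePred_add_one, ← y.sizePred_add_one, eq_of_initSeg_eq hxy]

theorem maximal_chainComplex_odd_iff {σ : Finset (Adm n)} :
    Maximal (· ∈ chainComplex fun I : Adm n => Odd I.size) σ ↔
      ∃ w : SignedPerm n, w.chain \ Adm.evens n = σ := by
  constructor
  · intro hσ
    obtain ⟨w, hw⟩ := exists_subset_chain hσ.1.2
    refine ⟨w, (hσ.eq_of_le w.chain_sdiff_evens_mem_chainComplex fun x hx => ?_).symm⟩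
    exact Adm.mem_sdiff_evens.2 ⟨hw hx, hσ.1.1 x hx⟩
  · rintro ⟨w, rfl⟩
    exact maximal_iff.2 ⟨w.chain_sdiff_evens_mem_chainComplex, fun τ hτ hsub =>
      eq_of_subset_of_card_le hsub (w.card_le_card_chain_sdiff_evens hτ)⟩

theorem exists_isShellingOrder_chainComplex_odd (n : ℕ) :
    ∃ (T : ℕ) (H : Fin T → Finset (Adm n)), Function.Injective H ∧
      (∀ σ, Maximal (· ∈ chainComplex fun I : Adm n => Odd I.size) σ ↔ ∃ m, H m = σ) ∧
      IsShellingOrder H := by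
  set e := Fintype.orderIsoFinOfCardEq (SignedPerm n) rfl
  set E := Adm.evens n
  obtain ⟨s, d, hd, hleast, hrange⟩ :=
    Fin.exists_strictMono_firstOccurrences fun j => (e j).chain \ E
  have hfacet : ∀ m l, (e m).chain \ E ⊆ (e l).chain \ E → (e m).chain \ E = (e l).chain \ E :=
    fun m l h => eq_of_subset_of_card_le h
      ((e m).card_le_card_chain_sdiff_evens (e l).chain_sdiff_evens_mem_chainComplex)
  refine ⟨s, fun m => (e (d m)).chain \ E,
    fun a b hab => hd.injective ((hleast a (d b) hab.symm).antisymm (hleast b (d a) hab)),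
    fun σ => ?_, (isShellingOrder_chain e).sdiff_firstOccurrences hfacet hd (fun _ => rfl)
      hleast (Set.range_subset_iff.2 hrange)⟩
  rw [maximal_chainComplex_odd_iff]
  constructor
  · rintro ⟨w, rfl⟩
    obtain ⟨m, hm⟩ := hrange (e.symm w)
    exact ⟨m, by simpa using hm⟩
  · rintro ⟨m, rfl⟩
    exact ⟨e (d m), rfl⟩

end SignedPerm

theorem shelling_of_deleted_general (V : Type*) [DecidableEq V] (t s : ℕ)
    (F : Fin t → Finset V) (E : Finset V)
    (hshell : IsShellingOrder F)
    (hfacet : ∀ m l : Fin t, F m \ E ⊆ F l \ E → F m \ E = F l \ E)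
    (G : Fin s → Finset V)
    (hrange : Set.range G = Set.range fun m => F m \ E)
    (d : Fin s → Fin t) (hdmono : StrictMono d)
    (hG : ∀ m, G m = F (d m) \ E)
    (hleast : ∀ (m : Fin s) (j : Fin t), F j \ E = G m → d m ≤ j) :
    IsShellingOrder G ∧
    ∀ n : ℕ, ∃ (T : ℕ) (H : Fin T → Finset (Adm n)),
      Function.Injective H ∧
      (∀ σ : Finset (Adm n),
        ((∀ I ∈ σ, Odd I.size) ∧ IsChain (· ≤ ·) (σ : Set (Adm n)) ∧
          ∀ τ : Finset (Adm n), (∀ I ∈ τ, Odd I.size) →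
            IsChain (· ≤ ·) (τ : Set (Adm n)) → σ ⊆ τ → σ = τ)
        ↔ ∃ m, H m = σ) ∧
      IsShellingOrder H := by
  refine ⟨hshell.sdiff_firstOccurrences hfacet hdmono hG hleast hrange.superset, fun n => ?_⟩
  obtain ⟨T, H, hinj, hfacets, hH⟩ := SignedPerm.exists_isShellingOrder_chainComplex_odd n
  exact ⟨T, H, hinj, fun σ => maximal_mem_chainComplex_iff.symm.trans (hfacets σ), hH⟩

/-- If `F 1, …, F t` is a shelling of a pure complex `K` and `E` a vertex set
such that the sets `F'_m = F m \ E` are nonempty, of equal cardinality, and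
facets of the full subcomplex `K'` on the vertices outside `E`, then the
ordering `G` of the distinct sets `F'_m` by first appearance is a shelling of
`K'`.  In particular, `K_{B_n}^{odd}` is shellable for every `n`. -/
theorem shelling_of_deleted (V : Type*) [DecidableEq V] (t s : ℕ)
    (F : Fin t → Finset V) (E : Finset V)
    (hshell : IsShellingOrder F)
    (hne : ∀ m, (F m \ E).Nonempty)
    (hcard : ∀ m l, (F m \ E).card = (F l \ E).card)
    (hfacet : ∀ m l : Fin t, F m \ E ⊆ F l \ E → F m \ E = F l \ E)
    (G : Fin s → Finset V) (hGinj : Function.Injective G)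
    (hrange : Set.range G = Set.range fun m => F m \ E)
    (d : Fin s → Fin t) (hdmono : StrictMono d)
    (hG : ∀ m, G m = F (d m) \ E)
    (hleast : ∀ (m : Fin s) (j : Fin t), F j \ E = G m → d m ≤ j) :
    IsShellingOrder G ∧
    ∀ n : ℕ, ∃ (T : ℕ) (H : Fin T → Finset (Adm n)),
      Function.Injective H ∧
      (∀ σ : Finset (Adm n),
        ((∀ I ∈ σ, Odd I.size) ∧ IsChain (· ≤ ·) (σ : Set (Adm n)) ∧
          ∀ τ : Finset (Adm n), (∀ I ∈ τ, Odd I.size) →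
            IsChain (· ≤ ·) (τ : Set (Adm n)) → σ ⊆ τ → σ = τ)
        ↔ ∃ m, H m = σ) ∧
      IsShellingOrder H :=
  shelling_of_deleted_general V t s F E hshell hfacet G hrange d hdmono hG hleast
end

section
/- In the poset of odd-cardinality admissible subsets of [±n] (with bottom ∅ and top adjoined), the Möbius function value μ(∅, I) for an odd-cardinality admissible set I with |I| = 2k+1 depends only on |I| and equals (-1)^{k+1} a_{2k+1}, where a_m is the m-th Euler zigzag number. -/
/-
Below a vertex `I` the poset is the family of odd-size subsets of the support of `I`, so by strong
induction on `|I| = 2k + 1` the value `μ(∅, I)` depends only on `k` and obeys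
`μ_k = -(1 + ∑_{j<k} C(2k+1, 2j+1) μ_j)`. The numbers `(-1)^(k+1) a_{2k+1}` obey the same
recurrence: comparing the coefficients of `x^(2k+1)` in `(sec x + tan x) cos x = 1 + sin x` gives
`∑_{j≤k} (-1)^j C(2k+1, 2j+1) a_{2j+1} = 1`.
-/

open scoped Classical

/-- An odd-cardinality admissible subset of `[±n]`, encoded as a function
`Fin n → Option Bool` (`some true` at `i`: `i+1 ∈ I`; `some false`: `-(i+1) ∈ I`). -/
def AdmOdd (n : ℕ) : Type :=
  {f : Fin n → Option Bool //
    f ≠ (fun _ => none) ∧ Odd (Finset.univ.filter fun i => f i ≠ none).card}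

/-- Odd admissible subsets are ordered by inclusion. -/
instance (n : ℕ) : PartialOrder (AdmOdd n) where
  le f g := ∀ i b, f.1 i = some b → g.1 i = some b
  le_refl f i b h := h
  le_trans f g h hfg hgh i b hi := hgh i b (hfg i b hi)
  le_antisymm := by
    rintro ⟨f, hf⟩ ⟨g, hg⟩ hfg hgf
    refine Subtype.ext (funext fun i => ?_)
    show f i = g i
    rcases hfi : f i with _ | b
    · rcases hgi : g i with _ | b
      · rfl
      · exact absurd (hgf i b hgi) (by show ¬ f i = some b; rw [hfi]; simp)
    · exact (hfg i b hfi).symm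

noncomputable instance (n : ℕ) : Fintype (AdmOdd n) := by
  unfold AdmOdd; exact Subtype.fintype _

/-- The poset `S̃_{B_n}^{odd}`: the odd-cardinality admissible subsets of `[±n]`
with a bottom element (`∅`) and a top element (`[±n]`) adjoined. -/
def SBnOdd (n : ℕ) : Type := WithBot (WithTop (AdmOdd n))

noncomputable instance (n : ℕ) : PartialOrder (SBnOdd n) := by
  unfold SBnOdd; infer_instance
noncomputable instance (n : ℕ) : BoundedOrder (SBnOdd n) := by
  unfold SBnOdd; infer_instance
noncomputable instance (n : ℕ) : Fintype (SBnOdd n) := by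
  unfold SBnOdd WithBot WithTop; infer_instance

open Finset Real
open scoped Nat

theorem FormalMultilinearSeries.ofReal_le_radius_ofScalars {c : ℕ → ℝ} {r : ℝ}
    (h : ∀ x, |x| < r → Summable fun n => c n * x ^ n) :
    ENNReal.ofReal r ≤ (FormalMultilinearSeries.ofScalars ℝ c).radius := by
  refine ENNReal.le_of_forall_nnreal_lt fun s hs => ?_
  have hsr : |(s : ℝ)| < r := by simpa using hs
  refine FormalMultilinearSeries.le_radius_of_tendsto _ (l := 0) ?_
  simpa [FormalMultilinearSeries.ofScalars_norm, norm_mul, norm_pow] using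
    (h s hsr).tendsto_atTop_zero.norm

theorem summable_norm_mul_pow_of_forall_summable {c : ℕ → ℝ} {r x : ℝ}
    (h : ∀ x, |x| < r → Summable fun n => c n * x ^ n) (hx : |x| < r) :
    Summable fun n => ‖c n * x ^ n‖ := by
  have hlt : (‖x‖₊ : ENNReal) < (FormalMultilinearSeries.ofScalars ℝ c).radius :=
    (by simpa using hx : (‖x‖₊ : ENNReal) < ENNReal.ofReal r).trans_le
      (FormalMultilinearSeries.ofReal_le_radius_ofScalars h)
  simpa [FormalMultilinearSeries.ofScalars_norm, norm_mul, norm_pow] using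
    FormalMultilinearSeries.summable_norm_mul_pow _ hlt

theorem eq_of_hasSum_mul_pow {c d : ℕ → ℝ} {f : ℝ → ℝ} {r : ℝ} (hr : 0 < r)
    (hc : ∀ x, |x| < r → HasSum (fun n => c n * x ^ n) (f x))
    (hd : ∀ x, |x| < r → HasSum (fun n => d n * x ^ n) (f x)) : c = d := by
  have hseries : ∀ e : ℕ → ℝ, (∀ x, |x| < r → HasSum (fun n => e n * x ^ n) (f x)) →
      HasFPowerSeriesAt f (FormalMultilinearSeries.ofScalars ℝ e) 0 := fun e he =>
    ⟨ENNReal.ofReal r,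
      FormalMultilinearSeries.ofReal_le_radius_ofScalars fun x hx => (he x hx).summable,
      ENNReal.ofReal_pos.mpr hr, fun {y} hy => by
        rw [Metric.mem_eball, edist_zero_right, ← ofReal_norm,
          ENNReal.ofReal_lt_ofReal_iff hr] at hy
        simpa [FormalMultilinearSeries.ofScalars_apply_eq, mul_comm] using
          he y (by simpa using hy)⟩
  exact (FormalMultilinearSeries.ofScalars_series_eq_iff ℝ c d).mp
    ((hseries c hc).eq_formalMultilinearSeries (hseries d hd))

theorem hasSum_cauchyProduct_mul_pow {c d : ℕ → ℝ} {x F G : ℝ}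
    (hc : HasSum (fun n => c n * x ^ n) F) (hd : HasSum (fun n => d n * x ^ n) G)
    (hc' : Summable fun n => ‖c n * x ^ n‖) (hd' : Summable fun n => ‖d n * x ^ n‖) :
    HasSum (fun n => (∑ i ∈ range (n + 1), c i * d (n - i)) * x ^ n) (F * G) := by
  have h := hasSum_sum_range_mul_of_summable_norm hc' hd'
  rw [hc.tsum_eq, hd.tsum_eq] at h
  refine h.congr_fun fun n => ?_
  rw [sum_mul]
  refine sum_congr rfl fun i hi => ?_
  rw [← pow_mul_pow_sub x (mem_range_succ_iff.mp hi)]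
  ring

theorem Finset.sum_range_two_mul {M : Type*} [AddCommMonoid M] (f : ℕ → M) (n : ℕ) :
    ∑ i ∈ range (2 * n), f i = ∑ j ∈ range n, (f (2 * j) + f (2 * j + 1)) := by
  induction n with
  | zero => simp
  | succ n ih => rw [mul_add_one, sum_range_succ, sum_range_succ, sum_range_succ, ih, add_assoc]

theorem Finset.sum_powerset_filter_odd_card_lt {α M : Type*} [AddCommMonoid M] {X : Finset α}
    {k : ℕ} (hX : X.card = 2 * k + 1) (f : ℕ → M) :
    ∑ S ∈ X.powerset.filter (fun S => Odd S.card ∧ S.card < X.card), f S.card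
      = ∑ j ∈ range k, (2 * k + 1).choose (2 * j + 1) • f (2 * j + 1) := by
  rw [sum_filter, sum_powerset_apply_card fun m => if Odd m ∧ m < X.card then f m else 0, hX,
    show 2 * k + 1 + 1 = 2 * (k + 1) by ring, sum_range_two_mul, sum_range_succ]
  have hev (m : ℕ) : ¬Odd (2 * m) := Nat.not_odd_iff_even.mpr (even_two_mul m)
  simp only [hev, false_and, if_false, smul_zero, zero_add, lt_irrefl, and_false, add_zero]
  exact sum_congr rfl fun j hj => by simp [mem_range.mp hj]

noncomputable def cosCoeff (m : ℕ) : ℝ := if Even m then (-1) ^ (m / 2) / m ! else 0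

noncomputable def sinCoeff (m : ℕ) : ℝ := if Odd m then (-1) ^ (m / 2) / m ! else 0

theorem hasSum_cosCoeff (x : ℝ) : HasSum (fun m => cosCoeff m * x ^ m) (cos x) := by
  rw [← add_zero (cos x)]
  refine HasSum.even_add_odd ((hasSum_cos x).congr_fun fun k => ?_)
    (hasSum_zero.congr_fun fun k => ?_)
  · simp [cosCoeff, div_mul_eq_mul_div]
  · simp [cosCoeff]

theorem hasSum_sinCoeff (x : ℝ) : HasSum (fun m => sinCoeff m * x ^ m) (sin x) := by
  rw [← zero_add (sin x)]
  refine HasSum.even_add_odd (hasSum_zero.congr_fun fun k => ?_)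
    ((hasSum_sin x).congr_fun fun k => ?_)
  · simp [sinCoeff]
  · simp [sinCoeff, div_mul_eq_mul_div, Nat.add_div_of_dvd_right]

section Zigzag

variable {a : ℕ → ℝ}
    (ha : ∀ x : ℝ, |x| < π / 2 →
      HasSum (fun m : ℕ => a m * x ^ m / (m ! : ℝ)) (1 / cos x + tan x))
include ha

theorem sum_zigzag_mul_cosCoeff (n : ℕ) :
    ∑ i ∈ range (n + 1), a i / i ! * cosCoeff (n - i)
      = (if n = 0 then 1 else 0) + sinCoeff n := by
  have hsec : ∀ x, |x| < π / 2 → HasSum (fun m => a m / m ! * x ^ m) (1 / cos x + tan x) :=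
    fun x hx => by simpa only [mul_div_right_comm] using ha x hx
  have hprod : ∀ x, |x| < π / 2 →
      HasSum (fun n => (∑ i ∈ range (n + 1), a i / i ! * cosCoeff (n - i)) * x ^ n)
        (1 + sin x) := by
    intro x hx
    have hcos : cos x ≠ 0 := (cos_pos_of_mem_Ioo (abs_lt.mp hx)).ne'
    convert hasSum_cauchyProduct_mul_pow (hsec x hx) (hasSum_cosCoeff x)
      (summable_norm_mul_pow_of_forall_summable (fun y hy => (hsec y hy).summable) hx)
      (summable_norm_mul_pow_of_forall_summable (fun y _ => (hasSum_cosCoeff y).summable) hx)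
      using 1
    rw [tan_eq_sin_div_cos]
    field_simp
  have hone_add_sin : ∀ x,
      HasSum (fun n => ((if n = 0 then 1 else 0) + sinCoeff n) * x ^ n) (1 + sin x) := by
    intro x
    simp only [add_mul]
    refine HasSum.add ?_ (hasSum_sinCoeff x)
    exact (hasSum_ite_eq 0 (1 : ℝ)).congr_fun fun m => by split_ifs with hm <;> simp [hm]
  exact congrFun (eq_of_hasSum_mul_pow (half_pos pi_pos) hprod fun x _ => hone_add_sin x) n

theorem sum_neg_one_pow_mul_choose_mul_zigzag (k : ℕ) :
    ∑ j ∈ range (k + 1), (-1) ^ j * ((2 * k + 1).choose (2 * j + 1) : ℝ) * a (2 * j + 1)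
      = 1 := by
  have h := sum_zigzag_mul_cosCoeff ha (2 * k + 1)
  rw [show 2 * k + 1 + 1 = 2 * (k + 1) by ring, sum_range_two_mul] at h
  -- Only odd `i` contribute, since `cosCoeff` vanishes at odd indices.
  have hterm : ∀ j ∈ range (k + 1),
      a (2 * j) / (2 * j) ! * cosCoeff (2 * k + 1 - 2 * j)
        + a (2 * j + 1) / (2 * j + 1) ! * cosCoeff (2 * k + 1 - (2 * j + 1))
      = (-1) ^ k / (2 * k + 1) !
          * ((-1) ^ j * ((2 * k + 1).choose (2 * j + 1) : ℝ) * a (2 * j + 1)) := by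
    intro j hj
    obtain ⟨d, rfl⟩ := Nat.exists_eq_add_of_le (mem_range_succ_iff.mp hj)
    have hodd : 2 * (j + d) + 1 - 2 * j = 2 * d + 1 := by omega
    have hev : 2 * (j + d) + 1 - (2 * j + 1) = 2 * d := by omega
    have hsq : ((-1 : ℝ) ^ j) ^ 2 = 1 := by rw [← pow_mul, pow_mul', neg_one_sq, one_pow]
    rw [hodd, hev, Nat.cast_choose ℝ (by omega), hev]
    simp only [cosCoeff, Nat.not_even_two_mul_add_one, even_two_mul, if_true, if_false,
      Nat.mul_div_cancel_left _ two_pos, pow_add, mul_zero, zero_add]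
    field_simp
    rw [hsq, mul_one]
  rw [sum_congr rfl hterm, ← mul_sum] at h
  have hsin : sinCoeff (2 * k + 1) = (-1) ^ k / (2 * k + 1) ! := by
    simp [sinCoeff, Nat.add_div_of_dvd_right]
  rw [hsin, if_neg (by omega), zero_add] at h
  exact (mul_eq_left₀ (by positivity)).mp h

theorem neg_one_pow_mul_zigzag_recurrence (k : ℕ) :
    (-1) ^ (k + 1) * a (2 * k + 1)
      = -(1 + ∑ j ∈ range k,
          ((2 * k + 1).choose (2 * j + 1) : ℝ) * ((-1) ^ (j + 1) * a (2 * j + 1))) := by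
  have h := sum_neg_one_pow_mul_choose_mul_zigzag ha k
  rw [sum_range_succ, Nat.choose_self, Nat.cast_one, mul_one] at h
  have hneg :
      ∑ j ∈ range k, ((2 * k + 1).choose (2 * j + 1) : ℝ) * ((-1) ^ (j + 1) * a (2 * j + 1))
        = -∑ j ∈ range k,
            (-1) ^ j * ((2 * k + 1).choose (2 * j + 1) : ℝ) * a (2 * j + 1) := by
    rw [← sum_neg_distrib]
    exact sum_congr rfl fun j _ => by ring
  rw [hneg]
  linear_combination (-1 : ℝ) * h

end Zigzag

namespace AdmOdd

variable {n : ℕ}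

noncomputable def support (J : AdmOdd n) : Finset (Fin n) := univ.filter fun i => J.1 i ≠ none

theorem mem_support {J : AdmOdd n} {i : Fin n} : i ∈ J.support ↔ J.1 i ≠ none := by
  simp [support]

theorem odd_card_support (J : AdmOdd n) : Odd J.support.card := J.2.2

theorem support_mono {J I : AdmOdd n} (h : J ≤ I) : J.support ⊆ I.support := by
  intro i hi
  obtain ⟨b, hb⟩ := Option.ne_none_iff_exists'.mp (mem_support.mp hi)
  exact mem_support.mpr (by rw [h i b hb]; simp)

theorem eq_of_le_of_support_eq {J I : AdmOdd n} (h : J ≤ I) (hs : J.support = I.support) :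
    J = I := by
  refine Subtype.ext (funext fun i => ?_)
  rcases hb : J.1 i with _ | b
  · have : i ∉ I.support := by rw [← hs, mem_support, not_not, hb]
    rw [mem_support, not_not] at this
    exact this.symm
  · exact (h i b hb).symm

theorem card_support_lt_of_lt {J I : AdmOdd n} (h : J < I) : J.support.card < I.support.card :=
  card_lt_card ((support_mono h.le).ssubset_of_ne fun hs => h.ne (eq_of_le_of_support_eq h.le hs))

theorem filter_ite_mem_ne_none {I : AdmOdd n} {S : Finset (Fin n)} (hS : S ⊆ I.support) :
    univ.filter (fun i => (if i ∈ S then I.1 i else none) ≠ none) = S := by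
  ext i
  by_cases hi : i ∈ S
  · simpa [hi] using mem_support.mp (hS hi)
  · simp [hi]

noncomputable def restrict (I : AdmOdd n) (S : Finset (Fin n)) (hS : S ⊆ I.support)
    (hodd : Odd S.card) : AdmOdd n :=
  ⟨fun i => if i ∈ S then I.1 i else none,
    fun h => by
      obtain ⟨i, hi⟩ := card_pos.mp hodd.pos
      exact mem_support.mp (hS hi) (by simpa [hi] using congrFun h i),
    by rwa [filter_ite_mem_ne_none hS]⟩

variable {I : AdmOdd n} {S : Finset (Fin n)} {hS : S ⊆ I.support} {hodd : Odd S.card}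

theorem support_restrict : (I.restrict S hS hodd).support = S := filter_ite_mem_ne_none hS

theorem restrict_le : I.restrict S hS hodd ≤ I := fun i b hb => by
  by_cases hi : i ∈ S
  · simpa [restrict, hi] using hb
  · simp [restrict, hi] at hb

theorem restrict_support_of_le {J : AdmOdd n} (h : J ≤ I) :
    I.restrict J.support (support_mono h) J.odd_card_support = J := by
  refine Subtype.ext (funext fun i => ?_)
  show (if i ∈ J.support then I.1 i else none) = J.1 i
  rcases hb : J.1 i with _ | b
  · simp [mem_support, hb]
  · rw [if_pos (mem_support.mpr (by simp [hb])), h i b hb]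

theorem sum_lt_eq_sum_powerset_filter {M : Type*} [AddCommMonoid M] (I : AdmOdd n) (f : ℕ → M) :
    ∑ J ∈ univ.filter (· < I), f J.support.card
      = ∑ S ∈ I.support.powerset.filter (fun S => Odd S.card ∧ S.card < I.support.card),
          f S.card := by
  refine sum_bij' (fun J _ => J.support)
    (fun S hS => I.restrict S (mem_powerset.mp (mem_filter.mp hS).1) (mem_filter.mp hS).2.1)
    (fun J hJ => ?_) (fun S hS => ?_) (fun J hJ => ?_) (fun S hS => support_restrict)
    (fun J hJ => rfl)
  · have hlt : J < I := (mem_filter.mp hJ).2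
    exact mem_filter.mpr ⟨mem_powerset.mpr (support_mono hlt.le), J.odd_card_support,
      card_support_lt_of_lt hlt⟩
  · refine mem_filter.mpr ⟨mem_univ _, restrict_le.lt_of_ne fun h => ?_⟩
    have := congrArg (fun J : AdmOdd n => J.support.card) h
    simp only [support_restrict] at this
    exact (mem_filter.mp hS).2.2.ne this
  · exact restrict_support_of_le (mem_filter.mp hJ).2.le

end AdmOdd

namespace SBnOdd

variable {n : ℕ}

theorem sum_filter_bot_le_lt_coe {M : Type*} [AddCommMonoid M] (F : SBnOdd n → M)
    (I : AdmOdd n) :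
    ∑ z ∈ univ.filter (fun z : SBnOdd n =>
        ⊥ ≤ z ∧ z < ((I : WithTop (AdmOdd n)) : WithBot (WithTop (AdmOdd n)))), F z
      = F ⊥ + ∑ J ∈ univ.filter (· < I),
          F ((J : WithTop (AdmOdd n)) : WithBot (WithTop (AdmOdd n))) := by
  let e : AdmOdd n ↪ SBnOdd n :=
    ⟨fun J => ((J : WithTop (AdmOdd n)) : WithBot (WithTop (AdmOdd n))),
      fun J J' h => WithTop.coe_injective (WithBot.coe_injective h)⟩
  -- The order instances of `SBnOdd n` do not reduce to those of `WithBot (WithTop _)` for `simp`,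
  -- so the `WithBot`/`WithTop` order lemmas are applied by hand.
  have hset : univ.filter (fun z : SBnOdd n =>
        ⊥ ≤ z ∧ z < ((I : WithTop (AdmOdd n)) : WithBot (WithTop (AdmOdd n))))
      = insert ⊥ ((univ.filter (· < I)).map e) := by
    ext z
    simp only [mem_filter, mem_univ, true_and, mem_insert, mem_map]
    induction z using WithBot.recBotCoe with
    | bot => exact ⟨fun _ => Or.inl rfl, fun _ => ⟨le_rfl, WithBot.bot_lt_coe _⟩⟩
    | coe w =>
      refine ⟨fun ⟨_, hw⟩ => Or.inr ?_, ?_⟩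
      · obtain ⟨J, rfl⟩ := WithTop.ne_top_iff_exists.mp (WithBot.coe_lt_coe.mp hw).ne_top
        exact ⟨J, WithTop.coe_lt_coe.mp (WithBot.coe_lt_coe.mp hw), rfl⟩
      · rintro (h | ⟨J, hJ, hJw⟩)
        · exact absurd h WithBot.coe_ne_bot
        · rw [← hJw]
          exact ⟨bot_le, WithBot.coe_lt_coe.mpr (WithTop.coe_lt_coe.mpr hJ)⟩
  rw [hset, sum_insert fun h => ?_, sum_map]
  · rfl
  · obtain ⟨J, -, hJ⟩ := mem_map.mp h
    exact WithBot.coe_ne_bot hJ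

theorem mobius_coe_eq_of_recurrence {g : SBnOdd n → ℤ} (hbot : g ⊥ = 1)
    (hrec : ∀ y : SBnOdd n, ⊥ < y →
      g y = -∑ z ∈ univ.filter (fun z : SBnOdd n => ⊥ ≤ z ∧ z < y), g z)
    {f : ℕ → ℝ}
    (hf : ∀ k, f k = -(1 + ∑ j ∈ range k, ((2 * k + 1).choose (2 * j + 1) : ℝ) * f j))
    {k : ℕ} {I : AdmOdd n} (hI : I.support.card = 2 * k + 1) :
    (g ((I : WithTop (AdmOdd n)) : WithBot (WithTop (AdmOdd n))) : ℝ) = f k := by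
  induction k using Nat.strong_induction_on generalizing I with
  | _ k ih =>
  have hbelow : ∀ J ∈ univ.filter (· < I),
      (g ((J : WithTop (AdmOdd n)) : WithBot (WithTop (AdmOdd n))) : ℝ)
        = f (J.support.card / 2) := by
    intro J hJ
    obtain ⟨j, hj⟩ := J.odd_card_support
    have hlt := AdmOdd.card_support_lt_of_lt (mem_filter.mp hJ).2
    rw [hj, show (2 * j + 1) / 2 = j by omega]
    exact ih j (by omega) hj
  rw [hrec _ (WithBot.bot_lt_coe _), sum_filter_bot_le_lt_coe, hbot]
  push_cast
  rw [sum_congr rfl hbelow, AdmOdd.sum_lt_eq_sum_powerset_filter I fun m => f (m / 2),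
    sum_powerset_filter_odd_card_lt hI fun m => f (m / 2), hf k]
  simp only [nsmul_eq_mul, show ∀ j, (2 * j + 1) / 2 = j by omega]

end SBnOdd

/-- In the poset of odd-cardinality admissible subsets of `[±n]` (with bottom
`∅` and top adjoined), the Möbius function value `μ(∅, I)` for a vertex `I`
with `|I| = 2k+1` depends only on `|I|` and equals `(-1)^{k+1} a_{2k+1}`,
where `a` denotes the Euler zigzag numbers (EGF `sec x + tan x`). -/
theorem mobius_vertex (n : ℕ) (a : ℕ → ℝ)
    (ha : ∀ x : ℝ, |x| < Real.pi / 2 →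
      HasSum (fun m : ℕ => a m * x ^ m / (m.factorial : ℝ))
        (1 / Real.cos x + Real.tan x))
    (mu : SBnOdd n → SBnOdd n → ℤ)
    (hmu_refl : ∀ x, mu x x = 1)
    (hmu_rec : ∀ x y : SBnOdd n, x < y →
      mu x y = -∑ z ∈ Finset.univ.filter (fun z : SBnOdd n => x ≤ z ∧ z < y), mu x z)
    (I : AdmOdd n) (k : ℕ)
    (hI : (Finset.univ.filter fun i => I.1 i ≠ none).card = 2 * k + 1) :
    ((mu ⊥ ((I : WithTop (AdmOdd n)) : WithBot (WithTop (AdmOdd n))) : ℤ) : ℝ)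
      = (-1 : ℝ) ^ (k + 1) * a (2 * k + 1) :=
  SBnOdd.mobius_coe_eq_of_recurrence (hmu_refl ⊥) (hmu_rec ⊥)
    (f := fun k => (-1) ^ (k + 1) * a (2 * k + 1)) (neg_one_pow_mul_zigzag_recurrence ha) hI
end
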